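/- arXiv:1102.2637 — 6 statements merged into one kernel-verified Lean document; each statement's English description precedes it below -/
import Mathlib

section
/- Let I₁, I₂, I₃ ⊂ ℝ be pairwise disjoint open intervals and U = I₁ × I₂ × I₃. If M : U → ℝ is C² and satisfies (x_i − x_j) ∂_i∂_j M − ∂_i M + ∂_j M = 0 on U for all 1 ≤ i < j ≤ 3, then there exist functions m₁, m₂, m₃ : ℝ → ℝ such that M(x₁,x₂,x₃) = m₁(x₁)/((x₁−x₂)(x₁−x₃)) + m₂(x₂)/((x₂−x₁)(x₂−x₃)) + m₃(x₃)/((x₃−x₁)(x₃−x₂)) for all (x₁,x₂,x₃) ∈ U. -/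
/-!
Since `∂ⱼ((xᵢ - xⱼ) M) = (xᵢ - xⱼ) ∂ⱼM - M`, the EPD equation for the pair `(i, j)` says exactly
that `∂ᵢ∂ⱼ((xᵢ - xⱼ) M) = 0`. On a box this gives a rectangle rule: `(xᵢ - xⱼ) M` is determined
by its values on the hyperplanes `xᵢ = aᵢ` and `xⱼ = aⱼ` through a base point `a`. Applying it to
the three pairs expresses `M x` through the values of `M` on the three coordinate lines through
`a`, and the resulting rational identity reads
`M x - M a = ∑ᵢ ∏_{j ≠ i} (xᵢ - aⱼ) / (xᵢ - xⱼ) * (M (a with aᵢ := xᵢ) - M a)`.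
Together with `∑ᵢ xᵢ² / ∏_{j ≠ i} (xᵢ - xⱼ) = 1` this is Darboux's form.
-/

/-- The partial derivative of `f : ℝ³ → ℝ` in the `i`-th coordinate direction,
taken as a line (directional) derivative. -/
noncomputable def pd (i : Fin 3) (f : (Fin 3 → ℝ) → ℝ) (x : Fin 3 → ℝ) : ℝ :=
  lineDeriv ℝ f x (Pi.single i 1)

open Function Set Filter Topology

section LineDeriv

variable {𝕜 E : Type*} [NontriviallyNormedField 𝕜] [AddCommGroup E] [Module 𝕜 E]
  {f g : E → 𝕜} {f' g' : 𝕜} {x v : E}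

theorem HasLineDerivAt.congr_deriv (hf : HasLineDerivAt 𝕜 f f' x v) (h : f' = g') :
    HasLineDerivAt 𝕜 f g' x v :=
  h ▸ hf

theorem HasLineDerivAt.mul (hf : HasLineDerivAt 𝕜 f f' x v) (hg : HasLineDerivAt 𝕜 g g' x v) :
    HasLineDerivAt 𝕜 (fun y => f y * g y) (f' * g x + f x * g') x v := by
  have h := HasDerivAt.mul hf hg
  simp only [zero_smul, add_zero] at h
  exact h

theorem HasLineDerivAt.sub (hf : HasLineDerivAt 𝕜 f f' x v) (hg : HasLineDerivAt 𝕜 g g' x v) :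
    HasLineDerivAt 𝕜 (fun y => f y - g y) (f' - g') x v :=
  HasDerivAt.sub hf hg

theorem hasLineDerivAt_apply_sub_apply {ι : Type*} (i j : ι) (x v : ι → 𝕜) :
    HasLineDerivAt 𝕜 (fun y => y i - y j) (v i - v j) x v := by
  have := ((hasDerivAt_id (0 : 𝕜)).mul_const (v i - v j)).const_add (x i - x j)
  unfold HasLineDerivAt
  convert this using 1
  · ext t; simp only [Pi.add_apply, Pi.smul_apply, smul_eq_mul, id_eq]; ring
  · simp

end LineDeriv

section Box

variable {ι : Type*} [DecidableEq ι] {I : ι → Set ℝ} {f N g : (ι → ℝ) → ℝ} {f' : ℝ}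
  {x : ι → ℝ} {i j k : ι} {s t : ℝ}

theorem HasLineDerivAt.hasDerivAt_update
    (h : HasLineDerivAt ℝ f f' (update x k s) (Pi.single k 1)) :
    HasDerivAt (fun t => f (update x k t)) f' s := by
  have hline : ∀ t, update x k s + (-s + t) • Pi.single k (1 : ℝ) = update x k t := by
    intro t; ext m
    rcases eq_or_ne m k with rfl | hm <;> simp [*]
  have h' : HasDerivAt (fun u => f (update x k s + u • Pi.single k 1)) f' (-s + s) := by
    rwa [neg_add_cancel]
  simpa [hline] using h'.comp_const_add (-s) s

theorem apply_update_eq_of_hasLineDerivAt_zero (hIo : IsOpen (I k)) (hIc : (I k).OrdConnected)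
    (hf : ∀ y ∈ univ.pi I, HasLineDerivAt ℝ f 0 y (Pi.single k 1))
    (hx : x ∈ univ.pi I) (ht : t ∈ I k) : f (update x k t) = f x := by
  have hderiv : ∀ s ∈ I k, HasDerivAt (fun t => f (update x k t)) 0 s := fun s hs =>
    (hf _ ((update_mem_pi_iff_of_mem hx).2 fun _ => hs)).hasDerivAt_update
  simpa using hIo.is_const_of_deriv_eq_zero hIc.isPreconnected
    (fun s hs => (hderiv s hs).differentiableAt.differentiableWithinAt)
    (fun s hs => (hderiv s hs).deriv) ht (mem_univ_pi.1 hx k)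

theorem rectangle_rule_of_mixed_partial_eq_zero (hij : i ≠ j) (hIo : ∀ k, IsOpen (I k))
    (hIc : ∀ k, (I k).OrdConnected)
    (hN : ∀ y ∈ univ.pi I, HasLineDerivAt ℝ N (g y) y (Pi.single j 1))
    (hg : ∀ y ∈ univ.pi I, HasLineDerivAt ℝ g 0 y (Pi.single i 1))
    (hx : x ∈ univ.pi I) (hs : s ∈ I i) (ht : t ∈ I j) :
    N (update (update x i s) j t) + N x = N (update x i s) + N (update x j t) := by
  have hmem : ∀ y ∈ univ.pi I, update y i s ∈ univ.pi I := fun y hy =>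
    (update_mem_pi_iff_of_mem hy).2 fun _ => hs
  have hshift : ∀ y : ι → ℝ, ∀ u : ℝ,
      update (y + u • Pi.single j 1) i s = update y i s + u • Pi.single j 1 := by
    intro y u; ext m
    rcases eq_or_ne m i with rfl | hm <;> simp [*]
  have hdiff : ∀ y ∈ univ.pi I,
      HasLineDerivAt ℝ (fun y => N y - N (update y i s)) 0 y (Pi.single j 1) := by
    intro y hy
    have hNi : HasLineDerivAt ℝ (fun y => N (update y i s)) (g y) y (Pi.single j 1) := by
      rw [← apply_update_eq_of_hasLineDerivAt_zero (hIo i) (hIc i) hg hy hs]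
      simpa [HasLineDerivAt, hshift] using hN _ (hmem y hy)
    simpa using (hN y hy).sub hNi
  have := apply_update_eq_of_hasLineDerivAt_zero (hIo j) (hIc j) hdiff hx ht
  rw [update_comm hij.symm] at this
  linarith

end Box

theorem differentiableAt_pd {U : Set (Fin 3 → ℝ)} (hU : IsOpen U) {M : (Fin 3 → ℝ) → ℝ}
    (hM : ContDiffOn ℝ 2 M U) (j : Fin 3) {y : Fin 3 → ℝ} (hy : y ∈ U) :
    DifferentiableAt ℝ (pd j M) y := by
  have hM' : ∀ z ∈ U, ContDiffAt ℝ 2 M z := fun z hz => hM.contDiffAt (hU.mem_nhds hz)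
  have hpd : (fun z => fderiv ℝ M z (Pi.single j 1)) =ᶠ[𝓝 y] pd j M :=
    eventually_of_mem (hU.mem_nhds hy) fun z hz =>
      ((hM' z hz).differentiableAt (by norm_num)).lineDeriv_eq_fderiv.symm
  exact ((((hM' y hy).fderiv_right (m := 1) (by norm_num)).differentiableAt (by norm_num)).clm_apply
    (differentiableAt_const _)).congr_of_eventuallyEq hpd.symm

theorem epd_rectangle_rule {I : Fin 3 → Set ℝ} (hIo : ∀ k, IsOpen (I k))
    (hIc : ∀ k, (I k).OrdConnected) {M : (Fin 3 → ℝ) → ℝ} (hM : ContDiffOn ℝ 2 M (univ.pi I))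
    {i j : Fin 3} (hij : i ≠ j)
    (hepd : ∀ y ∈ univ.pi I, (y i - y j) * pd i (pd j M) y - pd i M y + pd j M y = 0)
    {x : Fin 3 → ℝ} (hx : x ∈ univ.pi I) {s t : ℝ} (hs : s ∈ I i) (ht : t ∈ I j) :
    (x i - x j) * M x = (x i - t) * M (update x j t) + (s - x j) * M (update x i s)
      - (s - t) * M (update (update x i s) j t) := by
  have hUo : IsOpen (univ.pi I) := isOpen_set_pi finite_univ fun k _ => hIo k
  have hM' : ∀ y ∈ univ.pi I, DifferentiableAt ℝ M y := fun y hy =>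
    (hM.contDiffAt (hUo.mem_nhds hy)).differentiableAt (by norm_num)
  have key := rectangle_rule_of_mixed_partial_eq_zero hij hIo hIc
    (N := fun y => (y i - y j) * M y) (g := fun y => (y i - y j) * pd j M y - M y)
    (fun y hy => by
      refine ((hasLineDerivAt_apply_sub_apply i j y _).mul
        (hM' y hy).lineDifferentiableAt.hasLineDerivAt).congr_deriv ?_
      simp only [pd, Pi.single_eq_of_ne hij, Pi.single_eq_same]; ring)
    (fun y hy => by
      refine (((hasLineDerivAt_apply_sub_apply i j y _).mul
        (differentiableAt_pd hUo hM j hy).lineDifferentiableAt.hasLineDerivAt).sub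
        (hM' y hy).lineDifferentiableAt.hasLineDerivAt).congr_deriv ?_
      rw [← hepd y hy]
      simp only [pd, Pi.single_eq_same, Pi.single_eq_of_ne hij.symm]; ring)
    hx hs ht
  simp only [update_self, update_of_ne hij, update_of_ne hij.symm] at key
  linarith

theorem eq_add_div_of_mul_eq {f A₀ A₁ A₂ x₀ x₁ x₂ : ℝ}
    (h₀₁ : x₀ - x₁ ≠ 0) (h₀₂ : x₀ - x₂ ≠ 0) (h₁₂ : x₁ - x₂ ≠ 0)
    (h : (x₀ - x₁) * (x₀ - x₂) * (x₁ - x₂) * f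
      = A₀ * (x₁ - x₂) - A₁ * (x₀ - x₂) + A₂ * (x₀ - x₁)) :
    f = A₀ / ((x₀ - x₁) * (x₀ - x₂)) + A₁ / ((x₁ - x₀) * (x₁ - x₂))
      + A₂ / ((x₂ - x₀) * (x₂ - x₁)) := by
  have h₁₀ : x₁ - x₀ ≠ 0 := sub_ne_zero.2 (sub_ne_zero.1 h₀₁).symm
  have h₂₀ : x₂ - x₀ ≠ 0 := sub_ne_zero.2 (sub_ne_zero.1 h₀₂).symm
  have h₂₁ : x₂ - x₁ ≠ 0 := sub_ne_zero.2 (sub_ne_zero.1 h₁₂).symm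
  field_simp
  linear_combination -(x₀ - x₁) * (x₀ - x₂) * (x₁ - x₂) * h

theorem darboux_interpolation {F : ℝ → ℝ → ℝ → ℝ} {x₀ x₁ x₂ a₀ a₁ a₂ : ℝ}
    (h₀₁ : x₀ - x₁ ≠ 0) (h₀₂ : x₀ - x₂ ≠ 0) (h₁₂ : x₁ - x₂ ≠ 0)
    (E₀₁ : (x₀ - x₁) * F x₀ x₁ x₂ = (x₀ - a₁) * F x₀ a₁ x₂ + (a₀ - x₁) * F a₀ x₁ x₂
      - (a₀ - a₁) * F a₀ a₁ x₂)
    (E₀₂ : (x₀ - x₂) * F x₀ a₁ x₂ = (x₀ - a₂) * F x₀ a₁ a₂ + (a₀ - x₂) * F a₀ a₁ x₂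
      - (a₀ - a₂) * F a₀ a₁ a₂)
    (E₁₂ : (x₁ - x₂) * F a₀ x₁ x₂ = (x₁ - a₂) * F a₀ x₁ a₂ + (a₁ - x₂) * F a₀ a₁ x₂
      - (a₁ - a₂) * F a₀ a₁ a₂) :
    F x₀ x₁ x₂ =
      ((x₀ - a₁) * (x₀ - a₂) * (F x₀ a₁ a₂ - F a₀ a₁ a₂) + x₀ ^ 2 * F a₀ a₁ a₂)
          / ((x₀ - x₁) * (x₀ - x₂))
        + ((x₁ - a₀) * (x₁ - a₂) * (F a₀ x₁ a₂ - F a₀ a₁ a₂) + x₁ ^ 2 * F a₀ a₁ a₂)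
          / ((x₁ - x₀) * (x₁ - x₂))
        + ((x₂ - a₀) * (x₂ - a₁) * (F a₀ a₁ x₂ - F a₀ a₁ a₂) + x₂ ^ 2 * F a₀ a₁ a₂)
          / ((x₂ - x₀) * (x₂ - x₁)) := by
  refine eq_add_div_of_mul_eq h₀₁ h₀₂ h₁₂ ?_
  linear_combination (x₀ - x₂) * (x₁ - x₂) * E₀₁
    + (x₁ - x₂) * (x₀ - a₁) * E₀₂ + (x₀ - x₂) * (a₀ - x₁) * E₁₂

/-- **Darboux's general solution of the Euler–Poisson–Darboux system in three
variables.** If `I₁, I₂, I₃` are pairwise disjoint open intervals, `U = I₁ × I₂ × I₃`,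
and `M : U → ℝ` is `C²` and satisfies `(x i - x j) ∂ᵢ∂ⱼM - ∂ᵢM + ∂ⱼM = 0` on `U` for all
`i < j`, then there exist `m₁, m₂, m₃ : ℝ → ℝ` with
`M x = ∑ i, m i (x i) / ∏_{j ≠ i} (x i - x j)` on `U`. -/
theorem epd_general_solution
    (I : Fin 3 → Set ℝ) (hIo : ∀ i, IsOpen (I i)) (hIc : ∀ i, (I i).OrdConnected)
    (hdisj : ∀ i j : Fin 3, i ≠ j → Disjoint (I i) (I j))
    (U : Set (Fin 3 → ℝ)) (hU : U = {x | ∀ i, x i ∈ I i})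
    (M : (Fin 3 → ℝ) → ℝ) (hM : ContDiffOn ℝ 2 M U)
    (hepd : ∀ i j : Fin 3, i < j → ∀ x ∈ U,
      (x i - x j) * pd i (pd j M) x - pd i M x + pd j M x = 0) :
    ∃ m : Fin 3 → ℝ → ℝ, ∀ x ∈ U,
      M x = ∑ i : Fin 3, m i (x i) / ∏ j ∈ Finset.univ.erase i, (x i - x j) := by
  obtain rfl | ⟨a, ha⟩ := U.eq_empty_or_nonempty
  · exact ⟨0, fun x hx => hx.elim⟩
  obtain rfl : U = univ.pi I := hU.trans (by ext; simp)
  refine ⟨fun i t => (∏ j ∈ Finset.univ.erase i, (t - a j)) * (M (update a i t) - M a)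
    + t ^ 2 * M a, fun x hx => ?_⟩
  have hne : ∀ i j, i ≠ j → x i - x j ≠ 0 := fun i j hij =>
    sub_ne_zero.2 ((hdisj i j hij).ne_of_mem (hx i trivial) (hx j trivial))
  have rect := fun (i j : Fin 3) (hij : i < j) y (hy : y ∈ univ.pi I) =>
    epd_rectangle_rule hIo hIc hM hij.ne (hepd i j hij) hy (ha i trivial) (ha j trivial)
  have hmem : ∀ k, update x k (a k) ∈ univ.pi I := fun k =>
    (update_mem_pi_iff_of_mem hx).2 fun _ => ha k trivial
  have E₀₁ := rect 0 1 (by decide) x hx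
  have E₀₂ := rect 0 2 (by decide) _ (hmem 1)
  have E₁₂ := rect 1 2 (by decide) _ (hmem 0)
  -- Viewing `M` as a function of three real variables lets `simp` evaluate the updated points.
  obtain ⟨F, hF⟩ : ∃ F : ℝ → ℝ → ℝ → ℝ, ∀ y, M y = F (y 0) (y 1) (y 2) :=
    ⟨fun p q r => M ![p, q, r], fun y => congrArg M (by ext k; fin_cases k <;> rfl)⟩
  simp only [hF, update_apply, Fin.sum_univ_three, Fin.isValue, Fin.reduceEq, ↓reduceIte,
    show Finset.univ.erase (0 : Fin 3) = {1, 2} by decide,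
    show Finset.univ.erase (1 : Fin 3) = {0, 2} by decide,
    show Finset.univ.erase (2 : Fin 3) = {0, 1} by decide,
    Finset.prod_insert, Finset.mem_singleton, Finset.prod_singleton, not_false_eq_true,
    zero_ne_one, one_ne_zero] at E₀₁ E₀₂ E₁₂ ⊢
  exact darboux_interpolation (hne 0 1 (by decide)) (hne 0 2 (by decide)) (hne 1 2 (by decide))
    E₀₁ E₀₂ E₁₂
end

section
/- Let U = I₁ × I₂ × I₃ ⊆ ℝ³ be an open box, R : U → ℝ smooth and positive, f_i : I_i → ℝ smooth and positive, and G_{(1)}, G_{(2)}, G_{(3)} : U → ℝ smooth positive functions with ∂_i G_{(i)} = 0 (G_{(i)} does not depend on u^i). Define H₁ = G_{(2)}G_{(3)}/(R²f₁), H₂ = G_{(1)}G_{(3)}/(R²f₂), H₃ = G_{(1)}G_{(2)}/(R²f₃). Suppose q_i : I_i → ℝ are continuous and satisfy on U the constraint ∑_{i=1}^{3} G_{(i)}² f_i² [∂_i²(1/R) + (f_i'/f_i)∂_i(1/R) + q_i(1/R)] = 0. Then for every choice of C² functions φ_i : I_i → ℝ with φ_i'' + (f_i'/f_i)φ_i'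 + q_iφ_i = 0, the function ψ(u) = R(u)·φ₁(u¹)φ₂(u²)φ₃(u³) satisfies the Laplace equation ∑_{i=1}^{3} ∂_i((H₁H₂H₃/H_i²) ∂_iψ) = 0 on U. -/
lemma pd_update (F : (Fin 3 → ℝ) → ℝ) (u : Fin 3 → ℝ) (i : Fin 3) (t : ℝ) :
    pd i F (Function.update u i t) = deriv (fun s => F (Function.update u i s)) t := by
  unfold pd lineDeriv
  have h : ∀ s : ℝ, Function.update u i t + s • (Pi.single i 1 : Fin 3 → ℝ)
      = Function.update u i (t + s) := by
    intro s; funext j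
    by_cases hj : j = i
    · subst hj; simp
    · simp [Function.update_of_ne hj, Pi.single_eq_of_ne hj]
  simp_rw [h]
  rw [deriv_comp_const_add (fun s => F (Function.update u i s)) t 0]
  simp

lemma pd_update' (F : (Fin 3 → ℝ) → ℝ) (u : Fin 3 → ℝ) (i : Fin 3) :
    pd i F u = deriv (fun s => F (Function.update u i s)) (u i) := by
  conv_lhs => rw [← Function.update_eq_self i u]
  exact pd_update F u i (u i)

lemma oneD (s : Set ℝ) (hs : IsOpen s) (a : ℝ) (ha : a ∈ s)
    (Rl fl φl : ℝ → ℝ) (K qa : ℝ)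
    (hRl : ContDiffOn ℝ (⊤ : ℕ∞) Rl s) (hfl : ContDiffOn ℝ (⊤ : ℕ∞) fl s) (hφl : ContDiffOn ℝ 2 φl s)
    (hRpos : ∀ t ∈ s, 0 < Rl t) (hfpos : ∀ t ∈ s, 0 < fl t)
    (hode : deriv (deriv φl) a + deriv fl a / fl a * deriv φl a + qa * φl a = 0) :
    deriv (fun t => K * fl t / Rl t ^ 2 * deriv (fun w => Rl w * φl w) t) a
      = -(K * φl a / fl a) * fl a ^ 2 *
        (deriv (deriv (fun t => 1 / Rl t)) a
          + deriv fl a / fl a * deriv (fun t => 1 / Rl t) a + qa * (1 / Rl a)) := by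
  have hmem : s ∈ nhds a := hs.mem_nhds ha
  have hR' : ContDiffOn ℝ (⊤ : ℕ∞) (deriv Rl) s := hRl.deriv_of_isOpen hs (by simp)
  have hφ' : ContDiffOn ℝ 1 (deriv φl) s := hφl.deriv_of_isOpen hs (by norm_num)
  have dR : ∀ t ∈ s, DifferentiableAt ℝ Rl t := fun t ht =>
    (hRl.differentiableOn (by simp)).differentiableAt (hs.mem_nhds ht)
  have dR' : ∀ t ∈ s, DifferentiableAt ℝ (deriv Rl) t := fun t ht =>
    (hR'.differentiableOn (by simp)).differentiableAt (hs.mem_nhds ht)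
  have df : ∀ t ∈ s, DifferentiableAt ℝ fl t := fun t ht =>
    (hfl.differentiableOn (by simp)).differentiableAt (hs.mem_nhds ht)
  have dφ : ∀ t ∈ s, DifferentiableAt ℝ φl t := fun t ht =>
    (hφl.differentiableOn (by norm_num)).differentiableAt (hs.mem_nhds ht)
  have dφ' : ∀ t ∈ s, DifferentiableAt ℝ (deriv φl) t := fun t ht =>
    (hφ'.differentiableOn (by norm_num)).differentiableAt (hs.mem_nhds ht)
  have rne : ∀ t ∈ s, Rl t ≠ 0 := fun t ht => (hRpos t ht).ne'
  have e1 : (fun t => K * fl t / Rl t ^ 2 * deriv (fun w => Rl w * φl w) t)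
      =ᶠ[nhds a] fun t => K * fl t / Rl t ^ 2 * (deriv Rl t * φl t + Rl t * deriv φl t) := by
    filter_upwards [hmem] with t ht
    rw [deriv_fun_mul (dR t ht) (dφ t ht)]
  rw [e1.deriv_eq]
  have e2 : (fun t => deriv (fun w => 1 / Rl w) t)
      =ᶠ[nhds a] fun t => -(deriv Rl t / Rl t ^ 2) := by
    filter_upwards [hmem] with t ht
    rw [((hasDerivAt_const t (1:ℝ)).fun_div ((dR t ht).hasDerivAt) (rne t ht)).deriv]
    ring
  have e2a : deriv (fun t => 1 / Rl t) a = -(deriv Rl a / Rl a ^ 2) := e2.self_of_nhds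
  rw [e2a, e2.deriv_eq]
  have h2 : HasDerivAt (fun t => -(deriv Rl t / Rl t ^ 2))
      (-((deriv (deriv Rl) a * Rl a ^ 2 - deriv Rl a * ((2:ℕ) * Rl a ^ 1 * deriv Rl a)) / (Rl a ^ 2) ^ 2)) a :=
    (((dR' a ha).hasDerivAt.div (((dR a ha).hasDerivAt).pow 2)
      (pow_ne_zero 2 (rne a ha)))).neg
  rw [h2.deriv]
  have h1 : HasDerivAt (fun t => K * fl t / Rl t ^ 2 * (deriv Rl t * φl t + Rl t * deriv φl t))
      (((K * deriv fl a) * Rl a ^ 2 - K * fl a * ((2:ℕ) * Rl a ^ 1 * deriv Rl a)) / (Rl a ^ 2) ^ 2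
        * (deriv Rl a * φl a + Rl a * deriv φl a)
        + K * fl a / Rl a ^ 2 *
          ((deriv (deriv Rl) a * φl a + deriv Rl a * deriv φl a)
            + (deriv Rl a * deriv φl a + Rl a * deriv (deriv φl) a))) a := by
    exact ((((df a ha).hasDerivAt.const_mul K).div (((dR a ha).hasDerivAt).pow 2)
        (pow_ne_zero 2 (rne a ha))).mul
      (((dR' a ha).hasDerivAt.mul (dφ a ha).hasDerivAt).add
        ((dR a ha).hasDerivAt.mul (dφ' a ha).hasDerivAt)))
  rw [h1.deriv]
  have hF : fl a ≠ 0 := (hfpos a ha).ne'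
  have hr : Rl a ≠ 0 := rne a ha
  have hp2 : deriv (deriv φl) a = -(deriv fl a / fl a * deriv φl a + qa * φl a) := by linarith
  rw [hp2]
  field_simp
  ring

lemma key (I : Fin 3 → Set ℝ) (hIo : ∀ i, IsOpen (I i)) (hIc : ∀ i, (I i).OrdConnected)
    (U : Set (Fin 3 → ℝ)) (hU : U = {u | ∀ i, u i ∈ I i})
    (R : (Fin 3 → ℝ) → ℝ) (hR : ContDiffOn ℝ (⊤ : ℕ∞) R U) (hRpos : ∀ u ∈ U, 0 < R u)
    (f : Fin 3 → ℝ → ℝ) (hf : ∀ i, ContDiffOn ℝ (⊤ : ℕ∞) (f i) (I i))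
    (hfpos : ∀ i, ∀ x ∈ I i, 0 < f i x)
    (G : Fin 3 → (Fin 3 → ℝ) → ℝ) (hG : ∀ i, ContDiffOn ℝ (⊤ : ℕ∞) (G i) U)
    (hGind : ∀ i, ∀ u ∈ U, pd i (G i) u = 0)
    (H : Fin 3 → (Fin 3 → ℝ) → ℝ)
    (q : Fin 3 → ℝ → ℝ)
    (φ : Fin 3 → ℝ → ℝ) (hφ : ∀ i, ContDiffOn ℝ 2 (φ i) (I i))
    (hode : ∀ i, ∀ x ∈ I i,
      deriv (deriv (φ i)) x + deriv (f i) x / f i x * deriv (φ i) x + q i x * φ i x = 0)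
    (ψ : (Fin 3 → ℝ) → ℝ)
    (i : Fin 3) (u : Fin 3 → ℝ) (hu : u ∈ U)
    (hA : ∀ v ∈ U, H 0 v * H 1 v * H 2 v / H i v ^ 2
      = G i v ^ 2 * f i (v i) / (R v ^ 2 * ∏ j ∈ Finset.univ.erase i, f j (v j)))
    (hB : ∀ t : ℝ, ψ (Function.update u i t)
      = R (Function.update u i t) * φ i t * ∏ j ∈ Finset.univ.erase i, φ j (u j))
    (hprodφ : (∏ j ∈ Finset.univ.erase i, φ j (u j)) * φ i (u i)
      = φ 0 (u 0) * φ 1 (u 1) * φ 2 (u 2))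
    (hprodf : (∏ j ∈ Finset.univ.erase i, f j (u j)) * f i (u i)
      = f 0 (u 0) * f 1 (u 1) * f 2 (u 2)) :
    pd i (fun v => H 0 v * H 1 v * H 2 v / H i v ^ 2 * pd i ψ v) u
      = -((φ 0 (u 0) * φ 1 (u 1) * φ 2 (u 2)) / (f 0 (u 0) * f 1 (u 1) * f 2 (u 2))) *
        (G i u ^ 2 * f i (u i) ^ 2 *
          (pd i (pd i fun v => 1 / R v) u
            + deriv (f i) (u i) / f i (u i) * pd i (fun v => 1 / R v) u
            + q i (u i) * (1 / R u))) := by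
  have hUopen : IsOpen U := by
    rw [hU]
    have : {u : Fin 3 → ℝ | ∀ j, u j ∈ I j} = ⋂ j, (fun v : Fin 3 → ℝ => v j) ⁻¹' (I j) := by
      ext v; simp
    rw [this]
    exact isOpen_iInter_of_finite fun j => (hIo j).preimage (continuous_apply j)
  have huI : ∀ j, u j ∈ I j := by rw [hU] at hu; exact hu
  have haI : u i ∈ I i := huI i
  have hLmem : ∀ t ∈ I i, Function.update u i t ∈ U := by
    intro t ht; rw [hU]; intro j
    by_cases hj : j = i
    · subst hj; simpa using ht
    · rw [Function.update_of_ne hj]; exact huI j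
  have hupd : (fun t : ℝ => Function.update u i t)
      = fun t => u + (t - u i) • (Pi.single i 1 : Fin 3 → ℝ) := by
    funext t; funext j
    by_cases hj : j = i
    · subst hj; simp
    · simp [Function.update_of_ne hj, Pi.single_eq_of_ne hj]
  have hLsm : ContDiff ℝ (⊤ : ℕ∞) (fun t : ℝ => Function.update u i t) := by
    rw [hupd]
    exact contDiff_const.add ((contDiff_id.sub contDiff_const).smul contDiff_const)
  have hRl : ContDiffOn ℝ (⊤ : ℕ∞) (fun t => R (Function.update u i t)) (I i) :=
    hR.comp hLsm.contDiffOn hLmem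
  have hRlpos : ∀ t ∈ I i, 0 < R (Function.update u i t) := fun t ht => hRpos _ (hLmem t ht)
  -- constancy of G i along the line
  have hGconst : ∀ t ∈ I i, G i (Function.update u i t) = G i u := by
    intro t ht
    have hconv : Convex ℝ (I i) := convex_iff_ordConnected.mpr (hIc i)
    have hgd : DifferentiableOn ℝ (fun w : ℝ => G i (Function.update u i w)) (I i) := by
      intro w hw
      have h1 : DifferentiableAt ℝ (G i) (Function.update u i w) :=
        ((hG i).differentiableOn (by simp)).differentiableAt (hUopen.mem_nhds (hLmem w hw))
      exact (h1.comp w ((hLsm.differentiable (by simp)) w)).differentiableWithinAt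
    have h0 : ∀ w ∈ I i, fderivWithin ℝ (fun w : ℝ => G i (Function.update u i w)) (I i) w = 0 := by
      intro w hw
      rw [fderivWithin_of_isOpen (hIo i) hw]
      have hd : deriv (fun w : ℝ => G i (Function.update u i w)) w = 0 := by
        have := pd_update (G i) u i w
        rw [← this]
        exact hGind i _ (hLmem w hw)
      apply ContinuousLinearMap.ext_ring
      rw [fderiv_apply_one_eq_deriv, hd]; rfl
    have := hconv.is_const_of_fderivWithin_eq_zero hgd h0 ht haI
    simpa using this
  -- the eventual equality
  set Pf : ℝ := ∏ j ∈ Finset.univ.erase i, f j (u j) with hPf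
  set Pφ : ℝ := ∏ j ∈ Finset.univ.erase i, φ j (u j) with hPφdef
  have hPfpos : 0 < Pf := Finset.prod_pos fun j _ => hfpos j (u j) (huI j)
  have ee : (fun s => H 0 (Function.update u i s) * H 1 (Function.update u i s) *
        H 2 (Function.update u i s) / H i (Function.update u i s) ^ 2 *
        pd i ψ (Function.update u i s))
      =ᶠ[nhds (u i)] fun t => G i u ^ 2 * Pφ / Pf * f i t / R (Function.update u i t) ^ 2 *
        deriv (fun w => R (Function.update u i w) * φ i w) t := by
    filter_upwards [(hIo i).mem_nhds haI] with t ht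
    have hv : Function.update u i t ∈ U := hLmem t ht
    rw [hA _ hv]
    have hcoord : (∏ j ∈ Finset.univ.erase i, f j (Function.update u i t j)) = Pf := by
      refine Finset.prod_congr rfl fun j hj => ?_
      rw [Function.update_of_ne (Finset.ne_of_mem_erase hj)]
    rw [hcoord, Function.update_self, hGconst t ht]
    -- pd i ψ
    have hψd : pd i ψ (Function.update u i t) = deriv (fun s => ψ (Function.update u i s)) t :=
      pd_update ψ u i t
    have hfun : (fun s => ψ (Function.update u i s))
        = fun s => R (Function.update u i s) * φ i s * Pφ := funext fun s => hB s
    have hdiff : DifferentiableAt ℝ (fun s => R (Function.update u i s) * φ i s) t := by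
      have h1 : DifferentiableAt ℝ (fun s => R (Function.update u i s)) t :=
        (hRl.differentiableOn (by simp)).differentiableAt ((hIo i).mem_nhds ht)
      have h2 : DifferentiableAt ℝ (φ i) t :=
        ((hφ i).differentiableOn (by norm_num)).differentiableAt ((hIo i).mem_nhds ht)
      exact h1.mul h2
    rw [hψd, hfun, deriv_mul_const hdiff Pφ]
    have hrne : R (Function.update u i t) ≠ 0 := (hRlpos t ht).ne'
    have hPfne : Pf ≠ 0 := hPfpos.ne'
    field_simp
  have step1 : pd i (fun v => H 0 v * H 1 v * H 2 v / H i v ^ 2 * pd i ψ v) u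
      = deriv (fun s => H 0 (Function.update u i s) * H 1 (Function.update u i s) *
          H 2 (Function.update u i s) / H i (Function.update u i s) ^ 2 *
          pd i ψ (Function.update u i s)) (u i) := pd_update' _ u i
  rw [step1, ee.deriv_eq]
  rw [oneD (I i) (hIo i) (u i) haI (fun t => R (Function.update u i t)) (f i) (φ i)
    (G i u ^ 2 * Pφ / Pf) (q i (u i))
    hRl (hf i) (hφ i) hRlpos (hfpos i) (hode i (u i) haI)]
  -- now rewrite pd's on RHS into derivs
  have E1 : pd i (fun v => 1 / R v) u
      = deriv (fun t => 1 / R (Function.update u i t)) (u i) := pd_update' _ u i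
  have E2 : pd i (pd i fun v => 1 / R v) u
      = deriv (deriv (fun t => 1 / R (Function.update u i t))) (u i) := by
    have h : (fun s => pd i (fun v => 1 / R v) (Function.update u i s))
        = deriv (fun t => 1 / R (Function.update u i t)) := funext fun s => pd_update _ u i s
    calc pd i (pd i fun v => 1 / R v) u
        = deriv (fun s => (pd i fun v => 1 / R v) (Function.update u i s)) (u i) :=
          pd_update' _ u i
      _ = _ := by rw [h]
  rw [E1, E2]
  have hself : Function.update u i (u i) = u := Function.update_eq_self i u
  rw [hself]
  have hfi : f i (u i) ≠ 0 := (hfpos i (u i) haI).ne'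
  rw [← hprodφ, ← hprodf]
  have hPfne : Pf ≠ 0 := hPfpos.ne'
  field_simp


/-- **Darboux's R-separability in the 3-dimensional Laplace equation.**
For an isothermic metric with Lamé coefficients `Hᵢ = G₍ⱼ₎G₍ₖ₎/(R² fᵢ)` on an open box
`U = I₁ × I₂ × I₃` (with `∂ᵢG₍ᵢ₎ = 0`), if the `R`-equation
`∑ i, G₍ᵢ₎² fᵢ² [∂ᵢ²(1/R) + (fᵢ'/fᵢ)∂ᵢ(1/R) + qᵢ (1/R)] = 0` holds on `U`, then for every
choice of `C²` solutions `φᵢ` of the separation equations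
`φᵢ'' + (fᵢ'/fᵢ)φᵢ' + qᵢφᵢ = 0`, the function `ψ = R·φ₁φ₂φ₃` satisfies the Laplace
equation `∑ i, ∂ᵢ((H₁H₂H₃/Hᵢ²) ∂ᵢψ) = 0` on `U`. -/
theorem darboux_R_separability_laplace3
    (I : Fin 3 → Set ℝ) (hIo : ∀ i, IsOpen (I i)) (hIc : ∀ i, (I i).OrdConnected)
    (U : Set (Fin 3 → ℝ)) (hU : U = {u | ∀ i, u i ∈ I i})
    (R : (Fin 3 → ℝ) → ℝ) (hR : ContDiffOn ℝ (⊤ : ℕ∞) R U) (hRpos : ∀ u ∈ U, 0 < R u)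
    (f : Fin 3 → ℝ → ℝ) (hf : ∀ i, ContDiffOn ℝ (⊤ : ℕ∞) (f i) (I i))
    (hfpos : ∀ i, ∀ x ∈ I i, 0 < f i x)
    (G : Fin 3 → (Fin 3 → ℝ) → ℝ) (hG : ∀ i, ContDiffOn ℝ (⊤ : ℕ∞) (G i) U)
    (hGpos : ∀ i, ∀ u ∈ U, 0 < G i u)
    (hGind : ∀ i, ∀ u ∈ U, pd i (G i) u = 0)
    (H : Fin 3 → (Fin 3 → ℝ) → ℝ)
    (hH : ∀ i u, H i u = (∏ j ∈ Finset.univ.erase i, G j u) / (R u ^ 2 * f i (u i)))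
    (q : Fin 3 → ℝ → ℝ) (hq : ∀ i, ContinuousOn (q i) (I i))
    (hconstraint : ∀ u ∈ U,
      ∑ i : Fin 3, G i u ^ 2 * f i (u i) ^ 2 *
        (pd i (pd i fun v => 1 / R v) u
          + deriv (f i) (u i) / f i (u i) * pd i (fun v => 1 / R v) u
          + q i (u i) * (1 / R u)) = 0)
    (φ : Fin 3 → ℝ → ℝ) (hφ : ∀ i, ContDiffOn ℝ 2 (φ i) (I i))
    (hode : ∀ i, ∀ x ∈ I i,
      deriv (deriv (φ i)) x + deriv (f i) x / f i x * deriv (φ i) x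
        + q i x * φ i x = 0)
    (ψ : (Fin 3 → ℝ) → ℝ)
    (hψ : ∀ u, ψ u = R u * (φ 0 (u 0) * φ 1 (u 1) * φ 2 (u 2))) :
    ∀ u ∈ U,
      ∑ i : Fin 3,
        pd i (fun v => H 0 v * H 1 v * H 2 v / H i v ^ 2 * pd i ψ v) u = 0 := by
  intro u hu
  have huI : ∀ j, u j ∈ I j := by rw [hU] at hu; exact hu
  have hcon := hconstraint u hu
  have e0 : (Finset.univ.erase (0 : Fin 3)) = {1, 2} := by decide
  have e1 : (Finset.univ.erase (1 : Fin 3)) = {0, 2} := by decide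
  have e2 : (Finset.univ.erase (2 : Fin 3)) = {0, 1} := by decide
  have pr0 : ∀ (g : Fin 3 → ℝ), (∏ j ∈ Finset.univ.erase (0 : Fin 3), g j) = g 1 * g 2 := by
    intro g; rw [e0, Finset.prod_insert (by decide), Finset.prod_singleton]
  have pr1 : ∀ (g : Fin 3 → ℝ), (∏ j ∈ Finset.univ.erase (1 : Fin 3), g j) = g 0 * g 2 := by
    intro g; rw [e1, Finset.prod_insert (by decide), Finset.prod_singleton]
  have pr2 : ∀ (g : Fin 3 → ℝ), (∏ j ∈ Finset.univ.erase (2 : Fin 3), g j) = g 0 * g 1 := by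
    intro g; rw [e2, Finset.prod_insert (by decide), Finset.prod_singleton]
  have hAgen : ∀ i : Fin 3, ∀ v ∈ U, H 0 v * H 1 v * H 2 v / H i v ^ 2
      = G i v ^ 2 * f i (v i) / (R v ^ 2 * ∏ j ∈ Finset.univ.erase i, f j (v j)) := by
    intro i v hv
    have hvI : ∀ j, v j ∈ I j := by rw [hU] at hv; exact hv
    have hRne : R v ≠ 0 := (hRpos v hv).ne'
    have hfne : ∀ j : Fin 3, f j (v j) ≠ 0 := fun j => (hfpos j (v j) (hvI j)).ne'
    have hGne : ∀ j : Fin 3, G j v ≠ 0 := fun j => (hGpos j v hv).ne'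
    rw [hH 0 v, hH 1 v, hH 2 v, hH i v,
      pr0 (fun j => G j v), pr1 (fun j => G j v), pr2 (fun j => G j v)]
    match i with
    | 0 =>
      rw [pr0 (fun j => G j v), pr0 (fun j => f j (v j))]
      have := hGne 1; have := hGne 2; have := hRne
      have := hfne 0; have := hfne 1; have := hfne 2
      field_simp
      try ring
    | 1 =>
      rw [pr1 (fun j => G j v), pr1 (fun j => f j (v j))]
      have := hGne 0; have := hGne 2; have := hRne
      have := hfne 0; have := hfne 1; have := hfne 2
      field_simp
      try ring
    | 2 =>
      rw [pr2 (fun j => G j v), pr2 (fun j => f j (v j))]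
      have := hGne 0; have := hGne 1; have := hRne
      have := hfne 0; have := hfne 1; have := hfne 2
      field_simp
      try ring
  have upd_self : ∀ (i : Fin 3) (t : ℝ), Function.update u i t i = t :=
    fun i t => Function.update_self i t u
  have upd_ne : ∀ (i j : Fin 3) (_ : j ≠ i) (t : ℝ), Function.update u i t j = u j :=
    fun i j h t => Function.update_of_ne h t u
  have hBgen : ∀ i : Fin 3, ∀ t : ℝ, ψ (Function.update u i t)
      = R (Function.update u i t) * φ i t * ∏ j ∈ Finset.univ.erase i, φ j (u j) := by
    intro i t
    rw [hψ]
    match i with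
    | 0 =>
      rw [pr0 (fun j => φ j (u j)), upd_self 0 t, upd_ne 0 1 (by decide) t,
        upd_ne 0 2 (by decide) t]
      ring
    | 1 =>
      rw [pr1 (fun j => φ j (u j)), upd_self 1 t, upd_ne 1 0 (by decide) t,
        upd_ne 1 2 (by decide) t]
      ring
    | 2 =>
      rw [pr2 (fun j => φ j (u j)), upd_self 2 t, upd_ne 2 0 (by decide) t,
        upd_ne 2 1 (by decide) t]
      ring
  have hpφ : ∀ i : Fin 3, (∏ j ∈ Finset.univ.erase i, φ j (u j)) * φ i (u i)
      = φ 0 (u 0) * φ 1 (u 1) * φ 2 (u 2) := by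
    intro i
    match i with
    | 0 => rw [pr0 (fun j => φ j (u j))]; ring
    | 1 => rw [pr1 (fun j => φ j (u j))]; ring
    | 2 => rw [pr2 (fun j => φ j (u j))]
  have hpf : ∀ i : Fin 3, (∏ j ∈ Finset.univ.erase i, f j (u j)) * f i (u i)
      = f 0 (u 0) * f 1 (u 1) * f 2 (u 2) := by
    intro i
    match i with
    | 0 => rw [pr0 (fun j => f j (u j))]; ring
    | 1 => rw [pr1 (fun j => f j (u j))]; ring
    | 2 => rw [pr2 (fun j => f j (u j))]
  rw [Fin.sum_univ_three] at hcon ⊢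
  rw [key I hIo hIc U hU R hR hRpos f hf hfpos G hG hGind H q φ hφ hode ψ 0 u hu
      (hAgen 0) (hBgen 0) (hpφ 0) (hpf 0),
    key I hIo hIc U hU R hR hRpos f hf hfpos G hG hGind H q φ hφ hode ψ 1 u hu
      (hAgen 1) (hBgen 1) (hpφ 1) (hpf 1),
    key I hIo hIc U hU R hR hRpos f hf hfpos G hG hGind H q φ hφ hode ψ 2 u hu
      (hAgen 2) (hBgen 2) (hpφ 2) (hpf 2)]
  linear_combination
    (-((φ 0 (u 0) * φ 1 (u 1) * φ 2 (u 2)) / (f 0 (u 0) * f 1 (u 1) * f 2 (u 2)))) * hcon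
end

section
/- Let U = I₁×I₂×I₃ ⊆ ℝ³ be an open box, fᵢ : Iᵢ → ℝ smooth positive functions of the single variable uⁱ, G₁, G₂, G₃ : U → ℝ smooth positive with ∂ᵢGᵢ = 0 (Gᵢ does not depend on uⁱ), and M : U → ℝ smooth positive. Set H₁ = G₂G₃/(Mf₁), H₂ = G₁G₃/(Mf₂), H₃ = G₁G₂/(Mf₃). Then the six equations ∂ⱼ(Hᵢ⁻¹ Hⱼ⁻¹ ∂ᵢHⱼ) = 0 for all i ≠ j (i,j ∈ {1,2,3}) hold on U if and only if ∂₂∂₃(M/G₁) = 0, ∂₁∂₃(M/G₂) = 0, and ∂₁∂₂(M/G₃) = 0 on U. -/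
open Filter

section Aux

variable {F F' f g : (Fin 3 → ℝ) → ℝ} {x v : Fin 3 → ℝ} {a b : ℝ} {i j : Fin 3}

lemma pd_congr' (h : F =ᶠ[nhds x] F') : pd i F x = pd i F' x := by
  unfold pd lineDeriv
  apply Filter.EventuallyEq.deriv_eq
  have hc : Continuous fun t : ℝ => x + t • (Pi.single i 1 : Fin 3 → ℝ) := by continuity
  have h0 : Filter.Tendsto (fun t : ℝ => x + t • (Pi.single i 1 : Fin 3 → ℝ)) (nhds 0) (nhds x) := by
    simpa using hc.tendsto 0
  exact h0.eventually h

lemma hld_mul (hf : HasLineDerivAt ℝ f a x v) (hg : HasLineDerivAt ℝ g b x v) :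
    HasLineDerivAt ℝ (fun y => f y * g y) (a * g x + f x * b) x v := by
  have h := HasDerivAt.mul hf hg
  simp only [zero_smul, add_zero] at h
  exact h

lemma hld_inv (hf : HasLineDerivAt ℝ f a x v) (h0 : f x ≠ 0) :
    HasLineDerivAt ℝ (fun y => (f y)⁻¹) (-a / f x ^ 2) x v := by
  have h := HasDerivAt.inv hf (by simpa using h0)
  simp only [zero_smul, add_zero] at h
  exact h

lemma hld_neg (hf : HasLineDerivAt ℝ f a x v) :
    HasLineDerivAt ℝ (fun y => -(f y)) (-a) x v :=
  HasDerivAt.neg hf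

lemma hld_coord (hij : i ≠ j) (g : ℝ → ℝ) (x : Fin 3 → ℝ) :
    HasLineDerivAt ℝ (fun w => g (w j)) 0 x (Pi.single i 1) := by
  have key : (fun t : ℝ => g ((x + t • (Pi.single i 1 : Fin 3 → ℝ)) j)) = fun _ => g (x j) := by
    funext t
    simp [Pi.single_apply, Ne.symm hij]
  show HasDerivAt (fun t : ℝ => g ((x + t • (Pi.single i 1 : Fin 3 → ℝ)) j)) 0 0
  rw [key]
  exact hasDerivAt_const _ _

lemma hld_pd (h : DifferentiableAt ℝ F x) (i : Fin 3) :
    HasLineDerivAt ℝ F (pd i F x) x (Pi.single i 1) := by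
  unfold pd
  rw [h.lineDeriv_eq_fderiv]
  exact h.hasFDerivAt.hasLineDerivAt _

lemma pd_pd_of_contDiffOn {U : Set (Fin 3 → ℝ)} (hUo : IsOpen U)
    (hF : ContDiffOn ℝ 2 F U) {u : Fin 3 → ℝ} (hu : u ∈ U) (i j : Fin 3) :
    HasLineDerivAt ℝ (pd i F)
        (fderiv ℝ (fderiv ℝ F) u (Pi.single j 1) (Pi.single i 1)) u (Pi.single j 1) ∧
      pd j (pd i F) u = fderiv ℝ (fderiv ℝ F) u (Pi.single j 1) (Pi.single i 1) := by
  have hmem : U ∈ nhds u := hUo.mem_nhds hu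
  have hF2 : ContDiffAt ℝ 2 F u := hF.contDiffAt hmem
  have hc : DifferentiableAt ℝ (fderiv ℝ F) u :=
    (hF2.fderiv_right (m := 1) (by norm_num)).differentiableAt one_ne_zero
  have heq : pd i F =ᶠ[nhds u] fun w => fderiv ℝ F w (Pi.single i 1) := by
    apply Filter.eventuallyEq_of_mem hmem
    intro w hw
    exact ((hF.contDiffAt (hUo.mem_nhds hw)).differentiableAt
      (by norm_num)).lineDeriv_eq_fderiv
  have hΦ : HasLineDerivAt ℝ (fun w => fderiv ℝ F w (Pi.single i 1))
      (fderiv ℝ (fderiv ℝ F) u (Pi.single j 1) (Pi.single i 1)) u (Pi.single j 1) := by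
    have h1 := (((ContinuousLinearMap.apply ℝ ℝ
        ((Pi.single i 1 : Fin 3 → ℝ))).hasFDerivAt.comp u
        hc.hasFDerivAt).hasLineDerivAt (Pi.single j 1))
    simpa [Function.comp_def] using h1
  have h2 : HasLineDerivAt ℝ (pd i F)
      (fderiv ℝ (fderiv ℝ F) u (Pi.single j 1) (Pi.single i 1)) u (Pi.single j 1) :=
    hΦ.congr_of_eventuallyEq heq
  exact ⟨h2, h2.lineDeriv⟩

lemma pd_comm {U : Set (Fin 3 → ℝ)} (hUo : IsOpen U)
    (hF : ContDiffOn ℝ 2 F U) {u : Fin 3 → ℝ} (hu : u ∈ U) (i j : Fin 3) :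
    pd j (pd i F) u = pd i (pd j F) u := by
  rw [(pd_pd_of_contDiffOn hUo hF hu i j).2, (pd_pd_of_contDiffOn hUo hF hu j i).2]
  exact (hF.contDiffAt (hUo.mem_nhds hu)).isSymmSndFDerivAt (by simp [minSmoothness_of_isRCLikeNormedField]) _ _

lemma dupin_key
    {U : Set (Fin 3 → ℝ)} (hUo : IsOpen U)
    {f : Fin 3 → ℝ → ℝ} {G : Fin 3 → (Fin 3 → ℝ) → ℝ} {M : (Fin 3 → ℝ) → ℝ}
    {H : Fin 3 → (Fin 3 → ℝ) → ℝ}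
    (hG : ∀ l, ContDiffOn ℝ 2 (G l) U)
    (hGpos : ∀ l, ∀ u ∈ U, 0 < G l u)
    (hGind : ∀ l, ∀ u ∈ U, pd l (G l) u = 0)
    (hM : ContDiffOn ℝ 2 M U) (hMpos : ∀ u ∈ U, 0 < M u)
    (hfpos : ∀ u ∈ U, ∀ l, 0 < f l (u l))
    (i j k : Fin 3) (hij : i ≠ j)
    (hHi : ∀ w, H i w = G j w * G k w / (M w * f i (w i)))
    (hHj : ∀ w, H j w = G i w * G k w / (M w * f j (w j)))
    {u : Fin 3 → ℝ} (hu : u ∈ U) :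
    pd j (fun v => (H i v)⁻¹ * (H j v)⁻¹ * pd i (H j) v) u
      = -(f i (u i) * (G j u)⁻¹) * pd j (pd i fun w => M w / G k w) u := by
  set Fk : (Fin 3 → ℝ) → ℝ := fun w => M w / G k w with hFkdef
  have hFk : ContDiffOn ℝ 2 Fk U := hM.div (hG k) fun w hw => (hGpos k w hw).ne'
  -- Step 1: pointwise identity on U
  have step1 : ∀ v ∈ U, (H i v)⁻¹ * (H j v)⁻¹ * pd i (H j) v
      = -(f i (v i) * ((G j v)⁻¹ * pd i Fk v)) := by
    intro v hv
    have hvnb : U ∈ nhds v := hUo.mem_nhds hv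
    have dM : DifferentiableAt ℝ M v := (hM.contDiffAt hvnb).differentiableAt (by norm_num)
    have dGi : DifferentiableAt ℝ (G i) v :=
      ((hG i).contDiffAt hvnb).differentiableAt (by norm_num)
    have dGk : DifferentiableAt ℝ (G k) v :=
      ((hG k).contDiffAt hvnb).differentiableAt (by norm_num)
    have hM' := hld_pd dM i
    have hGk' := hld_pd dGk i
    have hGi0 : HasLineDerivAt ℝ (G i) 0 v (Pi.single i 1) := by
      have h := hld_pd dGi i
      rwa [hGind i v hv] at h
    have hfj : HasLineDerivAt ℝ (fun w => f j (w j)) 0 v (Pi.single i 1) :=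
      hld_coord hij (f j) v
    have hmq : M v * f j (v j) ≠ 0 :=
      (mul_pos (hMpos v hv) (hfpos v hv j)).ne'
    have num := hld_mul hGi0 hGk'
    have den := hld_mul hM' hfj
    have deninv := hld_inv den hmq
    have hHjf : H j = fun y => G i y * G k y * (M y * f j (y j))⁻¹ :=
      funext fun w => by rw [hHj w, div_eq_mul_inv]
    have hpdHj : pd i (H j) v
        = (0 * G k v + G i v * pd i (G k) v) * (M v * f j (v j))⁻¹
          + G i v * G k v * (-(pd i M v * f j (v j) + M v * 0) / (M v * f j (v j)) ^ 2) := by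
      rw [hHjf]
      exact (hld_mul num deninv).lineDeriv
    have hGkinv := hld_inv hGk' (hGpos k v hv).ne'
    have hFkf : Fk = fun y => M y * (G k y)⁻¹ := funext fun w => div_eq_mul_inv _ _
    have hpdFk : pd i Fk v
        = pd i M v * (G k v)⁻¹ + M v * (-(pd i (G k) v) / G k v ^ 2) := by
      rw [hFkf]
      exact (hld_mul hM' hGkinv).lineDeriv
    rw [hpdHj, hpdFk, hHi v, hHj v]
    have ha := (hGpos i v hv).ne'
    have hb := (hGpos j v hv).ne'
    have hc := (hGpos k v hv).ne'
    have hm := (hMpos v hv).ne'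
    have hp := (hfpos v hv i).ne'
    have hq := (hfpos v hv j).ne'
    field_simp
    ring
  -- Step 2: replace the function by its formula near u
  have heq : (fun v => (H i v)⁻¹ * (H j v)⁻¹ * pd i (H j) v)
      =ᶠ[nhds u] fun v => -(f i (v i) * ((G j v)⁻¹ * pd i Fk v)) :=
    Filter.eventuallyEq_of_mem (hUo.mem_nhds hu) step1
  rw [pd_congr' heq]
  -- Step 3: differentiate the formula in direction j
  have hA : HasLineDerivAt ℝ (fun v => f i (v i)) 0 u (Pi.single j 1) :=
    hld_coord (Ne.symm hij) (f i) u
  have dGj : DifferentiableAt ℝ (G j) u :=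
    ((hG j).contDiffAt (hUo.mem_nhds hu)).differentiableAt (by norm_num)
  have hGj0 : HasLineDerivAt ℝ (G j) 0 u (Pi.single j 1) := by
    have h := hld_pd dGj j
    rwa [hGind j u hu] at h
  have hB := hld_inv hGj0 (hGpos j u hu).ne'
  have hP : HasLineDerivAt ℝ (pd i Fk) (pd j (pd i Fk) u) u (Pi.single j 1) := by
    obtain ⟨h1, h2⟩ := pd_pd_of_contDiffOn hUo hFk hu i j
    rwa [← h2] at h1
  have hE := hld_neg (hld_mul hA (hld_mul hB hP))
  have : pd j (fun v => -(f i (v i) * ((G j v)⁻¹ * pd i Fk v))) u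
      = -(0 * ((G j u)⁻¹ * pd i Fk u)
          + f i (u i) * (-0 / G j u ^ 2 * pd i Fk u + (G j u)⁻¹ * pd j (pd i Fk) u)) :=
    hE.lineDeriv
  rw [this]
  ring

end Aux

/-- **Proposition 5: the Dupin condition for an isothermic metric.** For the isothermic
Lamé coefficients `H₁ = G₂G₃/(Mf₁)`, `H₂ = G₁G₃/(Mf₂)`, `H₃ = G₁G₂/(Mf₃)` on an open box
`U`, the six equations `∂ⱼ(Hᵢ⁻¹Hⱼ⁻¹∂ᵢHⱼ) = 0` (`i ≠ j`) hold on `U` if and only if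
`∂₂∂₃(M/G₁) = ∂₁∂₃(M/G₂) = ∂₁∂₂(M/G₃) = 0` on `U`. -/
theorem isothermic_dupin_condition
    (I : Fin 3 → Set ℝ) (hIo : ∀ i, IsOpen (I i)) (hIc : ∀ i, (I i).OrdConnected)
    (U : Set (Fin 3 → ℝ)) (hU : U = {u | ∀ i, u i ∈ I i})
    (f : Fin 3 → ℝ → ℝ) (hf : ∀ i, ContDiffOn ℝ (⊤ : ℕ∞) (f i) (I i))
    (hfpos : ∀ i, ∀ x ∈ I i, 0 < f i x)
    (G : Fin 3 → (Fin 3 → ℝ) → ℝ) (hG : ∀ i, ContDiffOn ℝ (⊤ : ℕ∞) (G i) U)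
    (hGpos : ∀ i, ∀ u ∈ U, 0 < G i u)
    (hGind : ∀ i, ∀ u ∈ U, pd i (G i) u = 0)
    (M : (Fin 3 → ℝ) → ℝ) (hM : ContDiffOn ℝ (⊤ : ℕ∞) M U) (hMpos : ∀ u ∈ U, 0 < M u)
    (H : Fin 3 → (Fin 3 → ℝ) → ℝ)
    (hH : ∀ i u, H i u = (∏ j ∈ Finset.univ.erase i, G j u) / (M u * f i (u i))) :
    (∀ i j : Fin 3, i ≠ j → ∀ u ∈ U,
        pd j (fun v => (H i v)⁻¹ * (H j v)⁻¹ * pd i (H j) v) u = 0) ↔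
    ((∀ u ∈ U, pd 1 (pd 2 fun v => M v / G 0 v) u = 0) ∧
     (∀ u ∈ U, pd 0 (pd 2 fun v => M v / G 1 v) u = 0) ∧
     (∀ u ∈ U, pd 0 (pd 1 fun v => M v / G 2 v) u = 0)) := by
  have hUo : IsOpen U := by
    rw [hU]
    have h : {u : Fin 3 → ℝ | ∀ i, u i ∈ I i} = Set.pi Set.univ I := by
      ext u; simp [Set.mem_pi]
    rw [h]
    exact isOpen_set_pi Set.finite_univ fun i _ => hIo i
  have hfpos' : ∀ u ∈ U, ∀ l, 0 < f l (u l) := by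
    intro u hu l
    rw [hU] at hu
    exact hfpos l (u l) (hu l)
  have hG2 : ∀ l, ContDiffOn ℝ 2 (G l) U := fun l => (hG l).of_le (by exact WithTop.coe_le_coe.mpr (le_top : (2 : ℕ∞) ≤ ⊤))
  have hM2 : ContDiffOn ℝ 2 M U := hM.of_le (by exact WithTop.coe_le_coe.mpr (le_top : (2 : ℕ∞) ≤ ⊤))
  have hHfun : ∀ a b c : Fin 3, Finset.univ.erase a = {b, c} → b ≠ c →
      ∀ w, H a w = G b w * G c w / (M w * f a (w a)) := by
    intro a b c hset hbc w
    rw [hH a w, hset, Finset.prod_pair hbc]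
  have hFk : ∀ k : Fin 3, ContDiffOn ℝ 2 (fun w => M w / G k w) U := fun k =>
    hM2.div (hG2 k) fun w hw => (hGpos k w hw).ne'
  have hfac : ∀ (a b : Fin 3) (u : Fin 3 → ℝ), u ∈ U → -(f a (u a) * (G b u)⁻¹) ≠ 0 := by
    intro a b u hu
    have h1 := hfpos' u hu a
    have h2 := hGpos b u hu
    simp only [neg_ne_zero]
    positivity
  constructor
  · intro hL
    refine ⟨?_, ?_, ?_⟩
    · intro u hu
      have h := dupin_key hUo hG2 hGpos hGind hM2 hMpos hfpos' 2 1 0 (by decide)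
        (hHfun 2 1 0 (by decide) (by decide)) (hHfun 1 2 0 (by decide) (by decide)) hu
      have h0 := hL 2 1 (by decide) u hu
      rw [h] at h0
      exact (mul_eq_zero.mp h0).resolve_left (hfac 2 1 u hu)
    · intro u hu
      have h := dupin_key hUo hG2 hGpos hGind hM2 hMpos hfpos' 2 0 1 (by decide)
        (hHfun 2 0 1 (by decide) (by decide)) (hHfun 0 2 1 (by decide) (by decide)) hu
      have h0 := hL 2 0 (by decide) u hu
      rw [h] at h0
      exact (mul_eq_zero.mp h0).resolve_left (hfac 2 0 u hu)
    · intro u hu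
      have h := dupin_key hUo hG2 hGpos hGind hM2 hMpos hfpos' 1 0 2 (by decide)
        (hHfun 1 0 2 (by decide) (by decide)) (hHfun 0 1 2 (by decide) (by decide)) hu
      have h0 := hL 1 0 (by decide) u hu
      rw [h] at h0
      exact (mul_eq_zero.mp h0).resolve_left (hfac 1 0 u hu)
  · rintro ⟨h1, h2, h3⟩ i j hij u hu
    have hsplit : ∀ a b : Fin 3, a ≠ b → (a = 0 ∧ b = 1) ∨ (a = 0 ∧ b = 2) ∨ (a = 1 ∧ b = 0) ∨
        (a = 1 ∧ b = 2) ∨ (a = 2 ∧ b = 0) ∨ (a = 2 ∧ b = 1) := by decide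
    rcases hsplit i j hij with ⟨rfl, rfl⟩ | ⟨rfl, rfl⟩ | ⟨rfl, rfl⟩ | ⟨rfl, rfl⟩ | ⟨rfl, rfl⟩ | ⟨rfl, rfl⟩
    · -- i = 0, j = 1, k = 2
      rw [dupin_key hUo hG2 hGpos hGind hM2 hMpos hfpos' 0 1 2 (by decide)
        (hHfun 0 1 2 (by decide) (by decide)) (hHfun 1 0 2 (by decide) (by decide)) hu,
        pd_comm hUo (hFk 2) hu 0 1, h3 u hu, mul_zero]
    · -- i = 0, j = 2, k = 1
      rw [dupin_key hUo hG2 hGpos hGind hM2 hMpos hfpos' 0 2 1 (by decide)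
        (hHfun 0 2 1 (by decide) (by decide)) (hHfun 2 0 1 (by decide) (by decide)) hu,
        pd_comm hUo (hFk 1) hu 0 2, h2 u hu, mul_zero]
    · -- i = 1, j = 0, k = 2
      rw [dupin_key hUo hG2 hGpos hGind hM2 hMpos hfpos' 1 0 2 (by decide)
        (hHfun 1 0 2 (by decide) (by decide)) (hHfun 0 1 2 (by decide) (by decide)) hu,
        h3 u hu, mul_zero]
    · -- i = 1, j = 2, k = 0
      rw [dupin_key hUo hG2 hGpos hGind hM2 hMpos hfpos' 1 2 0 (by decide)
        (hHfun 1 2 0 (by decide) (by decide)) (hHfun 2 1 0 (by decide) (by decide)) hu,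
        pd_comm hUo (hFk 0) hu 1 2, h1 u hu, mul_zero]
    · -- i = 2, j = 0, k = 1
      rw [dupin_key hUo hG2 hGpos hGind hM2 hMpos hfpos' 2 0 1 (by decide)
        (hHfun 2 0 1 (by decide) (by decide)) (hHfun 0 2 1 (by decide) (by decide)) hu,
        h2 u hu, mul_zero]
    · -- i = 2, j = 1, k = 0
      rw [dupin_key hUo hG2 hGpos hGind hM2 hMpos hfpos' 2 1 0 (by decide)
        (hHfun 2 1 0 (by decide) (by decide)) (hHfun 1 2 0 (by decide) (by decide)) hu,
        h1 u hu, mul_zero]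
end

section
/- Let I₁, I₂, I₃ ⊂ ℝ be pairwise disjoint open intervals, U = I₁×I₂×I₃, let aᵢ : Iᵢ → ℝ be smooth and positive, bᵢ : Iᵢ → ℝ smooth, and suppose M(u) = ∑_{i=1}^{3} bᵢ(uⁱ)/∏_{j≠i}(uⁱ−uʲ) is nowhere zero on U. For each i, with (i,j,k) a cyclic permutation of (1,2,3), set Hᵢ = M⁻¹ (uⁱ−uʲ)⁻¹(uⁱ−uᵏ)⁻¹ aᵢ(uⁱ)^{−1/2}. Then for all i ≠ j the equations ∂ⱼ(Hᵢ⁻¹ Hⱼ⁻¹ ∂ᵢHⱼ) = 0 hold on U. -/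
set_option maxHeartbeats 1000000 in
lemma darboux_core (βi : ℝ → ℝ) (Bj Bk c ci x y z bi' : ℝ)
    (hbi : HasDerivAt βi bi' x)
    (hxy : x - y ≠ 0) (hxz : x - z ≠ 0) (hyz : y - z ≠ 0)
    (hc : c ≠ 0) (hci : ci ≠ 0)
    (hm : βi x / ((x-y)*(x-z)) + Bj / ((y-x)*(y-z)) + Bk / ((z-x)*(z-y)) ≠ 0) :
    ∃ D, HasDerivAt (fun s => (βi s / ((s-y)*(s-z)) + Bj / ((y-s)*(y-z)) + Bk / ((z-s)*(z-y)))⁻¹ * (y-s)⁻¹ * (y-z)⁻¹ * c⁻¹) D x ∧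
      ((βi x / ((x-y)*(x-z)) + Bj / ((y-x)*(y-z)) + Bk / ((z-x)*(z-y)))⁻¹ * (x-y)⁻¹ * (x-z)⁻¹ * ci⁻¹)⁻¹ *
      (((βi x / ((x-y)*(x-z)) + Bj / ((y-x)*(y-z)) + Bk / ((z-x)*(z-y)))⁻¹ * (y-x)⁻¹ * (y-z)⁻¹ * c⁻¹)⁻¹) * D
        = -ci * (bi' + (Bk - βi x)/(x-z)) := by
  have hyx : y - x ≠ 0 := fun h => hxy (by linarith [sub_eq_zero.mp h])
  have hzx : z - x ≠ 0 := fun h => hxz (by linarith [sub_eq_zero.mp h])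
  have hzy : z - y ≠ 0 := fun h => hyz (by linarith [sub_eq_zero.mp h])
  have hP : HasDerivAt (fun s => (s-y)*(s-z)) (1*(x-z) + (x-y)*1) x :=
    ((hasDerivAt_id x).sub_const y).mul ((hasDerivAt_id x).sub_const z)
  have hQ : HasDerivAt (fun s => (y-s)*(y-z)) ((0-1)*(y-z)) x :=
    ((hasDerivAt_const x y).sub (hasDerivAt_id x)).mul_const (y-z)
  have hR : HasDerivAt (fun s => (z-s)*(z-y)) ((0-1)*(z-y)) x :=
    ((hasDerivAt_const x z).sub (hasDerivAt_id x)).mul_const (z-y)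
  have hPx : (x-y)*(x-z) ≠ 0 := mul_ne_zero hxy hxz
  have hQx : (y-x)*(y-z) ≠ 0 := mul_ne_zero hyx hyz
  have hRx : (z-x)*(z-y) ≠ 0 := mul_ne_zero hzx hzy
  have hmD := ((hbi.div hP hPx).add ((hasDerivAt_const x Bj).div hQ hQx)).add
    ((hasDerivAt_const x Bk).div hR hRx)
  set m' : ℝ := bi'/((x-y)*(x-z)) - βi x*(2*x-y-z)/((x-y)^2*(x-z)^2)
      + Bj/((y-x)^2*(y-z)) + Bk/((z-x)^2*(z-y)) with hm'def
  have hmD' : HasDerivAt (fun s => βi s / ((s-y)*(s-z)) + Bj / ((y-s)*(y-z)) + Bk / ((z-s)*(z-y))) m' x := by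
    refine hmD.congr_deriv ?_
    rw [hm'def]; field_simp; ring
  have hyinv : HasDerivAt (fun s => (y-s)⁻¹) (-(0-1)/(y-x)^2) x :=
    ((hasDerivAt_const x y).sub (hasDerivAt_id x)).inv hyx
  set mx : ℝ := βi x / ((x-y)*(x-z)) + Bj / ((y-x)*(y-z)) + Bk / ((z-x)*(z-y)) with hmxdef
  have hD2 := (((hmD'.inv hm).mul hyinv).mul_const ((y-z)⁻¹)).mul_const (c⁻¹)
  refine ⟨(-m' / mx ^ 2 * (y-x)⁻¹ + mx⁻¹ * (-(0-1)/(y-x)^2)) * (y-z)⁻¹ * c⁻¹, hD2, ?_⟩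
  have e1 : ∀ mxv m'v : ℝ, mxv ≠ 0 →
      (mxv⁻¹*(x-y)⁻¹*(x-z)⁻¹*ci⁻¹)⁻¹ * ((mxv⁻¹*(y-x)⁻¹*(y-z)⁻¹*c⁻¹)⁻¹) *
        ((-m'v/mxv^2*(y-x)⁻¹ + mxv⁻¹*(-(0-1)/(y-x)^2))*(y-z)⁻¹*c⁻¹)
      = ci*(-((x-y)*(x-z)*m'v) - (x-z)*mxv) := by
    intro mxv m'v hmxv
    field_simp
    ring
  have e2 : -((x-y)*(x-z)*m') - (x-z)*mx = -(bi' + (Bk - βi x)/(x-z)) := by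
    rw [hm'def, hmxdef]; field_simp; ring
  rw [e1 mx m' hm, e2]; ring

lemma darboux_key
    (I : Fin 3 → Set ℝ) (hIo : ∀ i, IsOpen (I i))
    (hdisj : ∀ i j : Fin 3, i ≠ j → Disjoint (I i) (I j))
    (U : Set (Fin 3 → ℝ)) (hU : U = {u | ∀ i, u i ∈ I i})
    (a : Fin 3 → ℝ → ℝ) (hapos : ∀ i, ∀ x ∈ I i, 0 < a i x)
    (b : Fin 3 → ℝ → ℝ) (hb : ∀ i, ContDiffOn ℝ (⊤ : ℕ∞) (b i) (I i))
    (M : (Fin 3 → ℝ) → ℝ) (hMne : ∀ u ∈ U, M u ≠ 0)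
    (H : Fin 3 → (Fin 3 → ℝ) → ℝ)
    (i j k : Fin 3) (hij : i ≠ j) (hik : i ≠ k) (hjk : j ≠ k)
    (hMv : ∀ v : Fin 3 → ℝ, M v = b i (v i)/((v i - v j)*(v i - v k))
      + b j (v j)/((v j - v i)*(v j - v k)) + b k (v k)/((v k - v i)*(v k - v j)))
    (hHi : ∀ v, H i v = (M v)⁻¹ * (v i - v j)⁻¹ * (v i - v k)⁻¹ * (Real.sqrt (a i (v i)))⁻¹)
    (hHj : ∀ v, H j v = (M v)⁻¹ * (v j - v i)⁻¹ * (v j - v k)⁻¹ * (Real.sqrt (a j (v j)))⁻¹)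
    (u : Fin 3 → ℝ) (hu : u ∈ U) :
    pd j (fun v => (H i v)⁻¹ * (H j v)⁻¹ * pd i (H j) v) u = 0 := by
  have hmem : ∀ v ∈ U, ∀ l, v l ∈ I l := by
    intro v hv l; rw [hU] at hv; exact hv l
  have hUopen : IsOpen U := by
    have : U = Set.pi Set.univ I := by rw [hU]; ext v; simp [Set.mem_pi]
    rw [this]; exact isOpen_set_pi Set.finite_univ fun l _ => hIo l
  have hne : ∀ v ∈ U, ∀ l l' : Fin 3, l ≠ l' → v l - v l' ≠ 0 := by
    intro v hv l l' hll' h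
    have h1 : v l ∈ I l' := by rw [sub_eq_zero] at h; rw [h]; exact hmem v hv l'
    exact Set.disjoint_left.mp (hdisj l l' hll') (hmem v hv l) h1
  have hsq : ∀ v ∈ U, ∀ l, Real.sqrt (a l (v l)) ≠ 0 := fun v hv l =>
    (Real.sqrt_pos.mpr (hapos l _ (hmem v hv l))).ne'
  have hval : ∀ v ∈ U, (H i v)⁻¹ * (H j v)⁻¹ * pd i (H j) v
      = -Real.sqrt (a i (v i)) * (deriv (b i) (v i) + (b k (v k) - b i (v i))/(v i - v k)) := by
    intro v hv
    have hbi : HasDerivAt (b i) (deriv (b i) (v i)) (v i) :=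
      (((hb i).contDiffAt ((hIo i).mem_nhds (hmem v hv i))).differentiableAt (by simp)).hasDerivAt
    have hm : b i (v i) / ((v i - v j)*(v i - v k)) + b j (v j) / ((v j - v i)*(v j - v k))
        + b k (v k) / ((v k - v i)*(v k - v j)) ≠ 0 := by
      rw [← hMv v]; exact hMne v hv
    obtain ⟨D, hD, hid⟩ := darboux_core (b i) (b j (v j)) (b k (v k))
      (Real.sqrt (a j (v j))) (Real.sqrt (a i (v i))) (v i) (v j) (v k) (deriv (b i) (v i))
      hbi (hne v hv i j hij) (hne v hv i k hik) (hne v hv j k hjk)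
      (hsq v hv j) (hsq v hv i) hm
    have hpd : pd i (H j) v = D := by
      have h1 : HasDerivAt (fun t : ℝ => v i + t) 1 0 := (hasDerivAt_id 0).const_add (v i)
      have hcomp : HasDerivAt (fun t : ℝ =>
          ((b i (v i + t) / ((v i + t - v j)*(v i + t - v k))
            + b j (v j) / ((v j - (v i + t))*(v j - v k))
            + b k (v k) / ((v k - (v i + t))*(v k - v j)))⁻¹
            * (v j - (v i + t))⁻¹ * (v j - v k)⁻¹ * (Real.sqrt (a j (v j)))⁻¹)) D 0 := by
        have hD0 : HasDerivAt (fun s => (b i s / ((s - v j)*(s - v k))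
            + b j (v j) / ((v j - s)*(v j - v k))
            + b k (v k) / ((v k - s)*(v k - v j)))⁻¹
            * (v j - s)⁻¹ * (v j - v k)⁻¹ * (Real.sqrt (a j (v j)))⁻¹) D
            ((fun t : ℝ => v i + t) 0) := by simpa using hD
        have := hD0.comp 0 h1
        exact this.congr_deriv (mul_one D)
      have hfun : (fun t : ℝ => H j (v + t • (Pi.single i 1 : Fin 3 → ℝ))) = (fun t : ℝ =>
          ((b i (v i + t) / ((v i + t - v j)*(v i + t - v k))
            + b j (v j) / ((v j - (v i + t))*(v j - v k))
            + b k (v k) / ((v k - (v i + t))*(v k - v j)))⁻¹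
            * (v j - (v i + t))⁻¹ * (v j - v k)⁻¹ * (Real.sqrt (a j (v j)))⁻¹)) := by
        funext t
        rw [hHj, hMv]
        simp [Pi.single_eq_of_ne hij.symm, Pi.single_eq_of_ne (Ne.symm hjk),
          Pi.single_eq_of_ne hik.symm]
      have : HasLineDerivAt ℝ (H j) D v (Pi.single i 1 : Fin 3 → ℝ) := by
        unfold HasLineDerivAt
        rw [hfun]; exact hcomp
      exact this.lineDeriv
    rw [hpd, hHi v, hHj v, hMv v]
    exact hid
  have hcont : Continuous (fun t : ℝ => u + t • (Pi.single j 1 : Fin 3 → ℝ)) := by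
    exact continuous_const.add (continuous_id.smul continuous_const)
  have hSnhds : {t : ℝ | u + t • (Pi.single j 1 : Fin 3 → ℝ) ∈ U} ∈ nhds (0:ℝ) := by
    refine (hUopen.preimage hcont).mem_nhds ?_
    simpa using hu
  have hconst : (fun t : ℝ => (H i (u + t • (Pi.single j 1 : Fin 3 → ℝ)))⁻¹
        * (H j (u + t • (Pi.single j 1 : Fin 3 → ℝ)))⁻¹ * pd i (H j) (u + t • (Pi.single j 1 : Fin 3 → ℝ)))
      =ᶠ[nhds (0:ℝ)] (fun _ => -Real.sqrt (a i (u i))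
        * (deriv (b i) (u i) + (b k (u k) - b i (u i))/(u i - u k))) := by
    filter_upwards [hSnhds] with t ht
    rw [hval _ ht]
    simp [Pi.single_eq_of_ne hij, Pi.single_eq_of_ne hjk.symm]
  have hline : HasLineDerivAt ℝ (fun v => (H i v)⁻¹ * (H j v)⁻¹ * pd i (H j) v) 0 u
      (Pi.single j 1 : Fin 3 → ℝ) := by
    unfold HasLineDerivAt
    exact (hasDerivAt_const 0 _).congr_of_eventuallyEq hconst
  exact hline.lineDeriv

/-- **Lemma 1 (Dupin-cyclidic property).** With `M(u) = ∑ᵢ bᵢ(uⁱ)/∏_{j≠i}(uⁱ-uʲ)`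
nowhere zero on the box `U = I₁×I₂×I₃` of pairwise disjoint open intervals, and
`Hᵢ = M⁻¹(uⁱ-uʲ)⁻¹(uⁱ-uᵏ)⁻¹ aᵢ(uⁱ)^{-1/2}` for `(i,j,k)` cyclic, the six equations
`∂ⱼ(Hᵢ⁻¹Hⱼ⁻¹∂ᵢHⱼ) = 0` (`i ≠ j`) hold on `U`. -/
theorem darboux_metric_dupin
    (I : Fin 3 → Set ℝ) (hIo : ∀ i, IsOpen (I i)) (hIc : ∀ i, (I i).OrdConnected)
    (hdisj : ∀ i j : Fin 3, i ≠ j → Disjoint (I i) (I j))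
    (U : Set (Fin 3 → ℝ)) (hU : U = {u | ∀ i, u i ∈ I i})
    (a : Fin 3 → ℝ → ℝ) (ha : ∀ i, ContDiffOn ℝ (⊤ : ℕ∞) (a i) (I i))
    (hapos : ∀ i, ∀ x ∈ I i, 0 < a i x)
    (b : Fin 3 → ℝ → ℝ) (hb : ∀ i, ContDiffOn ℝ (⊤ : ℕ∞) (b i) (I i))
    (M : (Fin 3 → ℝ) → ℝ)
    (hM : ∀ u, M u = ∑ i : Fin 3, b i (u i) / ∏ j ∈ Finset.univ.erase i, (u i - u j))
    (hMne : ∀ u ∈ U, M u ≠ 0)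
    (H : Fin 3 → (Fin 3 → ℝ) → ℝ)
    (hH : ∀ i u, H i u = (M u)⁻¹ * (u i - u (i + 1))⁻¹ * (u i - u (i + 2))⁻¹ *
      (Real.sqrt (a i (u i)))⁻¹) :
    ∀ i j : Fin 3, i ≠ j → ∀ u ∈ U,
      pd j (fun v => (H i v)⁻¹ * (H j v)⁻¹ * pd i (H j) v) u = 0 := by
  have hM3 : ∀ v : Fin 3 → ℝ, M v = b 0 (v 0)/((v 0 - v 1)*(v 0 - v 2))
      + b 1 (v 1)/((v 1 - v 0)*(v 1 - v 2)) + b 2 (v 2)/((v 2 - v 0)*(v 2 - v 1)) := by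
    intro v
    rw [hM, Fin.sum_univ_three]
    rw [show (Finset.univ.erase (0:Fin 3)) = {1, 2} by decide,
      show (Finset.univ.erase (1:Fin 3)) = {0, 2} by decide,
      show (Finset.univ.erase (2:Fin 3)) = {0, 1} by decide,
      Finset.prod_pair (by decide), Finset.prod_pair (by decide),
      Finset.prod_pair (by decide)]
  have hH3 : ∀ (p q r : Fin 3), p + 1 = q → p + 2 = r → ∀ v : Fin 3 → ℝ,
      H p v = (M v)⁻¹ * (v p - v q)⁻¹ * (v p - v r)⁻¹ * (Real.sqrt (a p (v p)))⁻¹ := by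
    intro p q r hq hr v
    rw [hH, hq, hr]
  have hO : ∀ (p q r : Fin 3), p + 1 = q → p + 2 = r →
      (∀ v : Fin 3 → ℝ, H p v = (M v)⁻¹ * (v p - v q)⁻¹ * (v p - v r)⁻¹ * (Real.sqrt (a p (v p)))⁻¹)
      ∧ (∀ v : Fin 3 → ℝ, H p v = (M v)⁻¹ * (v p - v r)⁻¹ * (v p - v q)⁻¹ * (Real.sqrt (a p (v p)))⁻¹) := by
    intro p q r hq hr
    refine ⟨hH3 p q r hq hr, fun v => ?_⟩
    rw [hH3 p q r hq hr v]; ring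
  obtain ⟨hH012, hH021⟩ := hO 0 1 2 (by decide) (by decide)
  obtain ⟨hH120, hH102⟩ := hO 1 2 0 (by decide) (by decide)
  obtain ⟨hH201, hH210⟩ := hO 2 0 1 (by decide) (by decide)
  intro i j hij u hu
  have key := fun (p q r : Fin 3) h1 h2 h3 h4 h5 h6 =>
    darboux_key I hIo hdisj U hU a hapos b hb M hMne H p q r h1 h2 h3 h4 h5 h6 u hu
  fin_cases i <;> fin_cases j <;> first
  | exact absurd rfl hij
  | exact key 0 1 2 (by decide) (by decide) (by decide)
      (fun v => by rw [hM3 v]) hH012 hH102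
  | exact key 0 2 1 (by decide) (by decide) (by decide)
      (fun v => by rw [hM3 v]; ring) hH021 hH201
  | exact key 1 0 2 (by decide) (by decide) (by decide)
      (fun v => by rw [hM3 v]; ring) hH102 hH012
  | exact key 1 2 0 (by decide) (by decide) (by decide)
      (fun v => by rw [hM3 v]; ring) hH120 hH210
  | exact key 2 0 1 (by decide) (by decide) (by decide)
      (fun v => by rw [hM3 v]; ring) hH201 hH021
  | exact key 2 1 0 (by decide) (by decide) (by decide)
      (fun v => by rw [hM3 v]; ring) hH210 hH120
end

section
/- Let I₁, I₂, I₃ ⊂ ℝ be pairwise disjoint open intervals, U = I₁×I₂×I₃, let aᵢ : Iᵢ → ℝ be smooth and positive, bᵢ : Iᵢ → ℝ smooth, and suppose M(u) = ∑_{i=1}^{3} bᵢ(uⁱ)/∏_{j≠i}(uⁱ−uʲ) is nowhere zero on U. For each i, with (i,j,k) a cyclic permutation of (1,2,3), set Hᵢ = M⁻¹ (uⁱ−uʲ)⁻¹(uⁱ−uᵏ)⁻¹ aᵢ(uⁱ)^{−1/2}. Then the off-diagonal Lamé equations ∂ⱼ∂ₖHᵢ − Hⱼ⁻¹(∂ⱼHᵢ)(∂ₖHⱼ)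 − Hₖ⁻¹(∂ₖHᵢ)(∂ⱼHₖ) = 0 hold on U for every permutation (i,j,k) of (1,2,3). -/
open Filter

lemma pd_eq_of_eventually (d : Fin 3) (f : (Fin 3 → ℝ) → ℝ) (v : Fin 3 → ℝ)
    (φ : ℝ → ℝ) (φ' : ℝ)
    (heq : ∀ᶠ t in nhds (0:ℝ), f (v + t • (Pi.single d 1 : Fin 3 → ℝ)) = φ t)
    (hφ : HasDerivAt φ φ' 0) :
    pd d f v = φ' := by
  have h : (fun t : ℝ => f (v + t • (Pi.single d 1 : Fin 3 → ℝ))) =ᶠ[nhds 0] φ := heq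
  show lineDeriv ℝ f v (Pi.single d 1) = φ'
  rw [lineDeriv, h.deriv_eq]
  exact hφ.deriv

lemma line_mem_nhds {V : Set (Fin 3 → ℝ)} (hV : IsOpen V) {v : Fin 3 → ℝ} (hv : v ∈ V)
    (w : Fin 3 → ℝ) : ∀ᶠ t in nhds (0:ℝ), v + t • w ∈ V := by
  have hc : Continuous (fun t : ℝ => v + t • w) := by continuity
  have h0 : (0:ℝ) ∈ (fun t : ℝ => v + t • w) ⁻¹' V := by simp [hv]
  exact (hV.preimage hc).mem_nhds h0

lemma coord_line (v : Fin 3 → ℝ) (d m : Fin 3) (t : ℝ) :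
    (v + t • (Pi.single d 1 : Fin 3 → ℝ)) m = v m + t * (if m = d then 1 else 0) := by
  simp [Pi.single_apply]

lemma pd_div (d : Fin 3) (v : Fin 3 → ℝ) (f : (Fin 3 → ℝ) → ℝ) (c : ℝ) (N D : ℝ → ℝ)
    (N' D' : ℝ)
    (heq : ∀ᶠ t in nhds (0:ℝ), f (v + t • (Pi.single d 1 : Fin 3 → ℝ)) = c * N t / D t)
    (hN : HasDerivAt N N' 0) (hD : HasDerivAt D D' 0) (hD0 : D 0 ≠ 0) :
    pd d f v = (c * N' * D 0 - c * N 0 * D') / (D 0)^2 := by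
  exact pd_eq_of_eventually d f v _ _ heq ((hN.const_mul c).div hD hD0)

lemma pd_div_sq (d : Fin 3) (v : Fin 3 → ℝ) (f : (Fin 3 → ℝ) → ℝ) (c : ℝ) (N D : ℝ → ℝ)
    (N' D' : ℝ)
    (heq : ∀ᶠ t in nhds (0:ℝ), f (v + t • (Pi.single d 1 : Fin 3 → ℝ)) = c * N t / (D t)^2)
    (hN : HasDerivAt N N' 0) (hD : HasDerivAt D D' 0) (hD0 : D 0 ≠ 0) :
    pd d f v = (c * N' * (D 0)^2 - c * N 0 * (2 * D 0 * D')) / ((D 0)^2)^2 := by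
  have hD2 : HasDerivAt (fun t => (D t)^2) (2 * D 0 * D') 0 := by
    have := hD.pow 2
    simp at this; exact this
  have hD20 : (fun t => (D t)^2) 0 ≠ 0 := by simpa using pow_ne_zero 2 hD0
  exact pd_eq_of_eventually d f v _ _ heq ((hN.const_mul c).div hD2 hD20)

/-- derivative of `t ↦ g (c + t)` at `0`. -/
lemma hasDerivAt_shift {g : ℝ → ℝ} {c : ℝ} (hg : DifferentiableAt ℝ g c) :
    HasDerivAt (fun t : ℝ => g (c + t)) (deriv g c) 0 := by
  have h1 : HasDerivAt (fun t : ℝ => c + t) 1 0 := by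
    simpa using (hasDerivAt_id (0:ℝ)).const_add c
  have h0 : HasDerivAt g (deriv g c) (c + 0) := by simpa using hg.hasDerivAt
  have := h0.comp 0 h1
  simp at this; exact this

set_option maxHeartbeats 2000000 in
lemma master (p q r : Fin 3) (hpq : p ≠ q) (hqr : q ≠ r) (hpr : p ≠ r)
    (V : Set (Fin 3 → ℝ)) (hV : IsOpen V)
    (b1 b2 b3 cF cG cK : ℝ → ℝ)
    (S F G K : (Fin 3 → ℝ) → ℝ)
    (hS : ∀ v, S v = b1 (v p) * (v q - v r) - b2 (v q) * (v p - v r) + b3 (v r) * (v p - v q))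
    (hd2 : ∀ v ∈ V, DifferentiableAt ℝ b2 (v q))
    (hd3 : ∀ v ∈ V, DifferentiableAt ℝ b3 (v r))
    (hSne : ∀ v ∈ V, S v ≠ 0)
    (hF : ∀ v ∈ V, F v = cF (v p) * (v q - v r) / S v)
    (hG : ∀ v ∈ V, G v = cG (v q) * (v r - v p) / S v)
    (hK : ∀ v ∈ V, K v = cK (v r) * (v p - v q) / S v)
    (u : Fin 3 → ℝ) (hu : u ∈ V)
    (hcG : cG (u q) ≠ 0) (hcK : cK (u r) ≠ 0)
    (hB : u r - u p ≠ 0) (hC : u p - u q ≠ 0) :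
    pd q (pd r F) u - (G u)⁻¹ * pd q F u * pd r G u - (K u)⁻¹ * pd r F u * pd q K u = 0 := by
  -- partial derivatives of S in the q and r directions
  set Sy : (Fin 3 → ℝ) → ℝ :=
    fun v => b1 (v p) - deriv b2 (v q) * (v p - v r) - b3 (v r) with hSy
  set Sz : (Fin 3 → ℝ) → ℝ :=
    fun v => -b1 (v p) + b2 (v q) + deriv b3 (v r) * (v p - v q) with hSz
  -- the denominator along the r-line through v, and its derivative
  have hDr : ∀ v ∈ V, HasDerivAt
      (fun t : ℝ => b1 (v p) * (v q - (v r + t)) - b2 (v q) * (v p - (v r + t))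
        + b3 (v r + t) * (v p - v q)) (Sz v) 0 := by
    intro v hv
    have h1 : HasDerivAt (fun t : ℝ => v q - (v r + t)) (-1) 0 := by
      simpa using ((hasDerivAt_id (0:ℝ)).const_add (v r)).const_sub (v q)
    have h2 : HasDerivAt (fun t : ℝ => v p - (v r + t)) (-1) 0 := by
      simpa using ((hasDerivAt_id (0:ℝ)).const_add (v r)).const_sub (v p)
    have h3 := hasDerivAt_shift (hd3 v hv)
    have h := ((h1.const_mul (b1 (v p))).sub (h2.const_mul (b2 (v q)))).add
      (h3.mul_const (v p - v q))
    convert h using 1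
    rotate_left 3
    simp only [hSz]; ring
    all_goals rfl
  have hDr0 : ∀ v : Fin 3 → ℝ,
      (b1 (v p) * (v q - (v r + 0)) - b2 (v q) * (v p - (v r + 0))
        + b3 (v r + 0) * (v p - v q)) = S v := by
    intro v; rw [hS]; norm_num
  -- the denominator along the q-line through v, and its derivative
  have hDq : ∀ v ∈ V, HasDerivAt
      (fun t : ℝ => b1 (v p) * ((v q + t) - v r) - b2 (v q + t) * (v p - v r)
        + b3 (v r) * (v p - (v q + t))) (Sy v) 0 := by
    intro v hv
    have h1 : HasDerivAt (fun t : ℝ => (v q + t) - v r) 1 0 := by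
      simpa using (((hasDerivAt_id (0:ℝ)).const_add (v q)).sub_const (v r))
    have h2 := hasDerivAt_shift (hd2 v hv)
    have h3 : HasDerivAt (fun t : ℝ => v p - (v q + t)) (-1) 0 := by
      simpa using ((hasDerivAt_id (0:ℝ)).const_add (v q)).const_sub (v p)
    have h := ((h1.const_mul (b1 (v p))).sub (h2.mul_const (v p - v r))).add
      (h3.const_mul (b3 (v r)))
    convert h using 1
    rotate_left 3
    simp only [hSy]; ring
    all_goals rfl
  have hDq0 : ∀ v : Fin 3 → ℝ,
      (b1 (v p) * ((v q + 0) - v r) - b2 (v q + 0) * (v p - v r)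
        + b3 (v r) * (v p - (v q + 0))) = S v := by
    intro v; rw [hS]; norm_num
  -- step 1: pd r F on all of V
  have pdrF : ∀ v ∈ V, pd r F v =
      (cF (v p) * (-1) * S v - cF (v p) * (v q - v r) * Sz v) / (S v)^2 := by
    intro v hv
    have heq : ∀ᶠ t in nhds (0:ℝ), F (v + t • (Pi.single r 1 : Fin 3 → ℝ)) =
        cF (v p) * (v q - (v r + t)) /
        (b1 (v p) * (v q - (v r + t)) - b2 (v q) * (v p - (v r + t))
          + b3 (v r + t) * (v p - v q)) := by
      filter_upwards [line_mem_nhds hV hv (Pi.single r 1)] with t ht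
      rw [hF _ ht, hS]
      simp [coord_line, hpr, hqr]
    have h1 : HasDerivAt (fun t : ℝ => v q - (v r + t)) (-1) 0 := by
      simpa using ((hasDerivAt_id (0:ℝ)).const_add (v r)).const_sub (v q)
    have h := pd_div r v F (cF (v p)) _ _ (-1) (Sz v) heq h1 (hDr v hv)
      (by rw [hDr0 v]; exact hSne v hv)
    simp only [hDr0 v] at h
    simpa using h
  -- step 2: pd q F at u
  have pdqF : pd q F u =
      (cF (u p) * 1 * S u - cF (u p) * (u q - u r) * Sy u) / (S u)^2 := by
    have heq : ∀ᶠ t in nhds (0:ℝ), F (u + t • (Pi.single q 1 : Fin 3 → ℝ)) =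
        cF (u p) * ((u q + t) - u r) /
        (b1 (u p) * ((u q + t) - u r) - b2 (u q + t) * (u p - u r)
          + b3 (u r) * (u p - (u q + t))) := by
      filter_upwards [line_mem_nhds hV hu (Pi.single q 1)] with t ht
      rw [hF _ ht, hS]
      simp [coord_line, hpq, Ne.symm hqr]
    have h1 : HasDerivAt (fun t : ℝ => (u q + t) - u r) 1 0 := by
      simpa using (((hasDerivAt_id (0:ℝ)).const_add (u q)).sub_const (u r))
    have h := pd_div q u F (cF (u p)) _ _ 1 (Sy u) heq h1 (hDq u hu)
      (by rw [hDq0 u]; exact hSne u hu)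
    simp only [hDq0 u] at h
    simpa using h
  -- step 3: pd r G at u
  have pdrG : pd r G u =
      (cG (u q) * 1 * S u - cG (u q) * (u r - u p) * Sz u) / (S u)^2 := by
    have heq : ∀ᶠ t in nhds (0:ℝ), G (u + t • (Pi.single r 1 : Fin 3 → ℝ)) =
        cG (u q) * ((u r + t) - u p) /
        (b1 (u p) * (u q - (u r + t)) - b2 (u q) * (u p - (u r + t))
          + b3 (u r + t) * (u p - u q)) := by
      filter_upwards [line_mem_nhds hV hu (Pi.single r 1)] with t ht
      rw [hG _ ht, hS]
      simp [coord_line, hpr, hqr]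
    have h1 : HasDerivAt (fun t : ℝ => (u r + t) - u p) 1 0 := by
      simpa using (((hasDerivAt_id (0:ℝ)).const_add (u r)).sub_const (u p))
    have h := pd_div r u G (cG (u q)) _ _ 1 (Sz u) heq h1 (hDr u hu)
      (by rw [hDr0 u]; exact hSne u hu)
    simp only [hDr0 u] at h
    simpa using h
  -- step 4: pd q K at u
  have pdqK : pd q K u =
      (cK (u r) * (-1) * S u - cK (u r) * (u p - u q) * Sy u) / (S u)^2 := by
    have heq : ∀ᶠ t in nhds (0:ℝ), K (u + t • (Pi.single q 1 : Fin 3 → ℝ)) =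
        cK (u r) * (u p - (u q + t)) /
        (b1 (u p) * ((u q + t) - u r) - b2 (u q + t) * (u p - u r)
          + b3 (u r) * (u p - (u q + t))) := by
      filter_upwards [line_mem_nhds hV hu (Pi.single q 1)] with t ht
      rw [hK _ ht, hS]
      simp [coord_line, hpq, Ne.symm hqr]
    have h1 : HasDerivAt (fun t : ℝ => u p - (u q + t)) (-1) 0 := by
      simpa using ((hasDerivAt_id (0:ℝ)).const_add (u q)).const_sub (u p)
    have h := pd_div q u K (cK (u r)) _ _ (-1) (Sy u) heq h1 (hDq u hu)
      (by rw [hDq0 u]; exact hSne u hu)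
    simp only [hDq0 u] at h
    simpa using h
  -- step 5: second derivative pd q (pd r F) at u
  have pdqrF : pd q (pd r F) u =
      (cF (u p) * ((-1) * Sy u - (Sz u + (u q - u r) * (deriv b2 (u q) - deriv b3 (u r))))
          * (S u)^2
        - cF (u p) * ((-1) * S u - (u q - u r) * Sz u) * (2 * S u * Sy u)) / ((S u)^2)^2 := by
    have heq : ∀ᶠ t in nhds (0:ℝ), pd r F (u + t • (Pi.single q 1 : Fin 3 → ℝ)) =
        cF (u p) * ((-1) * (b1 (u p) * ((u q + t) - u r) - b2 (u q + t) * (u p - u r)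
            + b3 (u r) * (u p - (u q + t)))
          - ((u q + t) - u r) * (-b1 (u p) + b2 (u q + t)
            + deriv b3 (u r) * (u p - (u q + t)))) /
        (b1 (u p) * ((u q + t) - u r) - b2 (u q + t) * (u p - u r)
          + b3 (u r) * (u p - (u q + t)))^2 := by
      filter_upwards [line_mem_nhds hV hu (Pi.single q 1)] with t ht
      rw [pdrF _ ht]
      simp only [hS, hSz, coord_line]
      simp [hpq, Ne.symm hqr, hpr, hqr]
      ring
    have hA : HasDerivAt (fun t : ℝ => (u q + t) - u r) 1 0 := by
      simpa using (((hasDerivAt_id (0:ℝ)).const_add (u q)).sub_const (u r))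
    have h3 : HasDerivAt (fun t : ℝ => u p - (u q + t)) (-1) 0 := by
      simpa using ((hasDerivAt_id (0:ℝ)).const_add (u q)).const_sub (u p)
    have hZq : HasDerivAt (fun t : ℝ => -b1 (u p) + b2 (u q + t)
        + deriv b3 (u r) * (u p - (u q + t))) (deriv b2 (u q) - deriv b3 (u r)) 0 := by
      have h2 := hasDerivAt_shift (hd2 u hu)
      have h := (h2.const_add (-b1 (u p))).add (h3.const_mul (deriv b3 (u r)))
      convert h using 1
      rotate_left 3
      ring
      all_goals rfl
    have hN : HasDerivAt (fun t : ℝ => (-1) * (b1 (u p) * ((u q + t) - u r)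
          - b2 (u q + t) * (u p - u r) + b3 (u r) * (u p - (u q + t)))
        - ((u q + t) - u r) * (-b1 (u p) + b2 (u q + t)
          + deriv b3 (u r) * (u p - (u q + t))))
        ((-1) * Sy u - (Sz u + (u q - u r) * (deriv b2 (u q) - deriv b3 (u r)))) 0 := by
      have h := ((hDq u hu).const_mul (-1)).sub (hA.mul hZq)
      convert h using 1
      rotate_left 3
      norm_num [hSy, hSz]
      all_goals rfl
    have h := pd_div_sq q u (pd r F) (cF (u p)) _ _ _ (Sy u) heq hN (hDq u hu)
      (by rw [hDq0 u]; exact hSne u hu)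
    simp only [hDq0 u] at h
    simpa using h
  -- the single algebraic relation needed
  have key : deriv b2 (u q) - deriv b3 (u r) =
      (S u + (u p - u q) * Sy u - (u r - u p) * Sz u) / ((u p - u q) * (u r - u p)) := by
    rw [hS u]
    simp only [hSy, hSz]
    field_simp
    ring
  -- final assembly
  rw [pdqrF, pdqF, pdrG, pdqK, pdrF u hu, hG u hu, hK u hu, key]
  have hSu : S u ≠ 0 := hSne u hu
  field_simp
  ring

/-- **Theorem 7(1): vanishing off-diagonal Ricci components.** With
`M(u) = ∑ᵢ bᵢ(uⁱ)/∏_{j≠i}(uⁱ-uʲ)` nowhere zero on the box `U = I₁×I₂×I₃` of pairwise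
disjoint open intervals and `Hᵢ = M⁻¹(uⁱ-uʲ)⁻¹(uⁱ-uᵏ)⁻¹ aᵢ(uⁱ)^{-1/2}` for `(i,j,k)`
cyclic, the off-diagonal Lamé equations
`H_{i,jk} - Hⱼ⁻¹H_{i,j}H_{j,k} - Hₖ⁻¹H_{i,k}H_{k,j} = 0` hold on `U` for every
permutation `(i,j,k)` of `(1,2,3)`. -/
theorem darboux_metric_ricci_offdiag
    (I : Fin 3 → Set ℝ) (hIo : ∀ i, IsOpen (I i)) (hIc : ∀ i, (I i).OrdConnected)
    (hdisj : ∀ i j : Fin 3, i ≠ j → Disjoint (I i) (I j))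
    (U : Set (Fin 3 → ℝ)) (hU : U = {u | ∀ i, u i ∈ I i})
    (a : Fin 3 → ℝ → ℝ) (ha : ∀ i, ContDiffOn ℝ (⊤ : ℕ∞) (a i) (I i))
    (hapos : ∀ i, ∀ x ∈ I i, 0 < a i x)
    (b : Fin 3 → ℝ → ℝ) (hb : ∀ i, ContDiffOn ℝ (⊤ : ℕ∞) (b i) (I i))
    (M : (Fin 3 → ℝ) → ℝ)
    (hM : ∀ u, M u = ∑ i : Fin 3, b i (u i) / ∏ j ∈ Finset.univ.erase i, (u i - u j))
    (hMne : ∀ u ∈ U, M u ≠ 0)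
    (H : Fin 3 → (Fin 3 → ℝ) → ℝ)
    (hH : ∀ i u, H i u = (M u)⁻¹ * (u i - u (i + 1))⁻¹ * (u i - u (i + 2))⁻¹ *
      (Real.sqrt (a i (u i)))⁻¹) :
    ∀ i j k : Fin 3, i ≠ j → j ≠ k → i ≠ k → ∀ u ∈ U,
      pd j (pd k (H i)) u - (H j u)⁻¹ * pd j (H i) u * pd k (H j) u
        - (H k u)⁻¹ * pd k (H i) u * pd j (H k) u = 0 := by
  -- U is open
  have hUo : IsOpen U := by
    rw [hU]
    have : {u : Fin 3 → ℝ | ∀ i, u i ∈ I i} = ⋂ i, (fun u : Fin 3 → ℝ => u i) ⁻¹' I i := by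
      ext u; simp
    rw [this]
    exact isOpen_iInter_of_finite fun i => (hIo i).preimage (continuous_apply i)
  -- coordinates are in the intervals, pairwise distinct
  have hmem : ∀ v ∈ U, ∀ m : Fin 3, v m ∈ I m := by
    intro v hv m; rw [hU] at hv; exact hv m
  have hne : ∀ m n : Fin 3, m ≠ n → ∀ v ∈ U, v m - v n ≠ 0 := by
    intro m n hmn v hv
    have := (hdisj m n hmn).ne_of_mem (hmem v hv m) (hmem v hv n)
    exact sub_ne_zero_of_ne this
  -- differentiability of the b's
  have hbd : ∀ m : Fin 3, ∀ v ∈ U, DifferentiableAt ℝ (b m) (v m) := by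
    intro m v hv
    exact ((hb m).contDiffAt ((hIo m).mem_nhds (hmem v hv m))).differentiableAt (by simp)
  -- the sqrt factors are nonzero
  have hc : ∀ m : Fin 3, ∀ v ∈ U, (Real.sqrt (a m (v m)))⁻¹ ≠ 0 := by
    intro m v hv
    exact inv_ne_zero (ne_of_gt (Real.sqrt_pos.mpr (hapos m _ (hmem v hv m))))
  -- canonical S and the representation of M
  obtain ⟨S0, hS0⟩ : ∃ S0 : (Fin 3 → ℝ) → ℝ, ∀ v, S0 v =
      b 0 (v 0) * (v 1 - v 2) - b 1 (v 1) * (v 0 - v 2) + b 2 (v 2) * (v 0 - v 1) :=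
    ⟨_, fun v => rfl⟩
  have hMrep : ∀ v ∈ U, M v = S0 v / ((v 0 - v 1) * (v 0 - v 2) * (v 1 - v 2)) := by
    intro v hv
    have h01 := hne 0 1 (by decide) v hv
    have h02 := hne 0 2 (by decide) v hv
    have h12 := hne 1 2 (by decide) v hv
    have h10 : v 1 - v 0 ≠ 0 := hne 1 0 (by decide) v hv
    have h20 : v 2 - v 0 ≠ 0 := hne 2 0 (by decide) v hv
    have h21 : v 2 - v 1 ≠ 0 := hne 2 1 (by decide) v hv
    rw [hM, Fin.sum_univ_three, hS0,
      show (Finset.univ.erase (0 : Fin 3)) = {1, 2} from by decide,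
      show (Finset.univ.erase (1 : Fin 3)) = {0, 2} from by decide,
      show (Finset.univ.erase (2 : Fin 3)) = {0, 1} from by decide]
    rw [show ((({1, 2} : Finset (Fin 3))).prod fun j => v 0 - v j) = (v 0 - v 1) * (v 0 - v 2) from by
      rw [Finset.prod_insert (by decide), Finset.prod_singleton],
      show ((({0, 2} : Finset (Fin 3))).prod fun j => v 1 - v j) = (v 1 - v 0) * (v 1 - v 2) from by
      rw [Finset.prod_insert (by decide), Finset.prod_singleton],
      show ((({0, 1} : Finset (Fin 3))).prod fun j => v 2 - v j) = (v 2 - v 0) * (v 2 - v 1) from by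
      rw [Finset.prod_insert (by decide), Finset.prod_singleton]]
    field_simp [h01, h02, h12, h10, h20, h21]
    ring
  have hS0ne : ∀ v ∈ U, S0 v ≠ 0 := by
    intro v hv h0
    apply hMne v hv
    rw [hMrep v hv, h0, zero_div]
  have hsq : ∀ m : Fin 3, ∀ v ∈ U, Real.sqrt (a m (v m)) ≠ 0 := by
    intro m v hv
    exact ne_of_gt (Real.sqrt_pos.mpr (hapos m _ (hmem v hv m)))
  -- representations of the three H's
  have hH0 : ∀ v ∈ U, H 0 v = (Real.sqrt (a 0 (v 0)))⁻¹ * (v 1 - v 2) / S0 v := by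
    intro v hv
    have h01 := hne 0 1 (by decide) v hv
    have h02 := hne 0 2 (by decide) v hv
    have h12 := hne 1 2 (by decide) v hv
    rw [hH 0 v, hMrep v hv,
      show (0 : Fin 3) + 1 = 1 from by decide, show (0 : Fin 3) + 2 = 2 from by decide]
    rw [inv_div]
    field_simp [h01, h02, h12, hS0ne v hv, hsq 0 v hv]
  have hH1 : ∀ v ∈ U, H 1 v = (Real.sqrt (a 1 (v 1)))⁻¹ * (v 2 - v 0) / S0 v := by
    intro v hv
    have h01 := hne 0 1 (by decide) v hv
    have h02 := hne 0 2 (by decide) v hv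
    have h12 := hne 1 2 (by decide) v hv
    have h10 : v 1 - v 0 ≠ 0 := hne 1 0 (by decide) v hv
    have h20 : v 2 - v 0 ≠ 0 := hne 2 0 (by decide) v hv
    rw [hH 1 v, hMrep v hv,
      show (1 : Fin 3) + 1 = 2 from by decide, show (1 : Fin 3) + 2 = 0 from by decide]
    rw [inv_div]
    field_simp [h01, h02, h12, h10, h20, hS0ne v hv, hsq 1 v hv]
    ring
  have hH2 : ∀ v ∈ U, H 2 v = (Real.sqrt (a 2 (v 2)))⁻¹ * (v 0 - v 1) / S0 v := by
    intro v hv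
    have h01 := hne 0 1 (by decide) v hv
    have h02 := hne 0 2 (by decide) v hv
    have h12 := hne 1 2 (by decide) v hv
    have h20 : v 2 - v 0 ≠ 0 := hne 2 0 (by decide) v hv
    have h21 : v 2 - v 1 ≠ 0 := hne 2 1 (by decide) v hv
    rw [hH 2 v, hMrep v hv,
      show (2 : Fin 3) + 1 = 0 from by decide, show (2 : Fin 3) + 2 = 1 from by decide]
    rw [inv_div]
    field_simp [h01, h02, h12, h20, h21, hS0ne v hv, hsq 2 v hv]
    ring
  -- negated S for odd permutations
  obtain ⟨S1, hS1⟩ : ∃ S1 : (Fin 3 → ℝ) → ℝ, ∀ v, S1 v = -S0 v := ⟨_, fun _ => rfl⟩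
  have hS1ne : ∀ v ∈ U, S1 v ≠ 0 := fun v hv => by
    rw [hS1]; exact neg_ne_zero.mpr (hS0ne v hv)
  have hH0' : ∀ v ∈ U, H 0 v = (Real.sqrt (a 0 (v 0)))⁻¹ * (v 2 - v 1) / S1 v := by
    intro v hv; rw [hS1, hH0 v hv, div_neg]; ring
  have hH1' : ∀ v ∈ U, H 1 v = (Real.sqrt (a 1 (v 1)))⁻¹ * (v 0 - v 2) / S1 v := by
    intro v hv; rw [hS1, hH1 v hv, div_neg]; ring
  have hH2' : ∀ v ∈ U, H 2 v = (Real.sqrt (a 2 (v 2)))⁻¹ * (v 1 - v 0) / S1 v := by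
    intro v hv; rw [hS1, hH2 v hv, div_neg]; ring
  intro i j k hij hjk hik u hu
  fin_cases i <;> fin_cases j <;> fin_cases k <;>
    first
    | exact absurd rfl hij
    | exact absurd rfl hjk
    | exact absurd rfl hik
    | exact master 0 1 2 (by decide) (by decide) (by decide) U hUo (b 0) (b 1) (b 2)
        (fun t => (Real.sqrt (a 0 t))⁻¹) (fun t => (Real.sqrt (a 1 t))⁻¹)
        (fun t => (Real.sqrt (a 2 t))⁻¹) S0 (H 0) (H 1) (H 2) hS0
        (fun v hv => hbd 1 v hv) (fun v hv => hbd 2 v hv) hS0ne hH0 hH1 hH2 u hu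
        (hc 1 u hu) (hc 2 u hu) (hne 2 0 (by decide) u hu) (hne 0 1 (by decide) u hu)
    | exact master 0 2 1 (by decide) (by decide) (by decide) U hUo (b 0) (b 2) (b 1)
        (fun t => (Real.sqrt (a 0 t))⁻¹) (fun t => (Real.sqrt (a 2 t))⁻¹)
        (fun t => (Real.sqrt (a 1 t))⁻¹) S1 (H 0) (H 2) (H 1)
        (fun v => by rw [hS1 v, hS0 v]; ring)
        (fun v hv => hbd 2 v hv) (fun v hv => hbd 1 v hv) hS1ne hH0' hH2' hH1' u hu
        (hc 2 u hu) (hc 1 u hu) (hne 1 0 (by decide) u hu) (hne 0 2 (by decide) u hu)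
    | exact master 1 0 2 (by decide) (by decide) (by decide) U hUo (b 1) (b 0) (b 2)
        (fun t => (Real.sqrt (a 1 t))⁻¹) (fun t => (Real.sqrt (a 0 t))⁻¹)
        (fun t => (Real.sqrt (a 2 t))⁻¹) S1 (H 1) (H 0) (H 2)
        (fun v => by rw [hS1 v, hS0 v]; ring)
        (fun v hv => hbd 0 v hv) (fun v hv => hbd 2 v hv) hS1ne hH1' hH0' hH2' u hu
        (hc 0 u hu) (hc 2 u hu) (hne 2 1 (by decide) u hu) (hne 1 0 (by decide) u hu)
    | exact master 1 2 0 (by decide) (by decide) (by decide) U hUo (b 1) (b 2) (b 0)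
        (fun t => (Real.sqrt (a 1 t))⁻¹) (fun t => (Real.sqrt (a 2 t))⁻¹)
        (fun t => (Real.sqrt (a 0 t))⁻¹) S0 (H 1) (H 2) (H 0)
        (fun v => by rw [hS0 v]; ring)
        (fun v hv => hbd 2 v hv) (fun v hv => hbd 0 v hv) hS0ne hH1 hH2 hH0 u hu
        (hc 2 u hu) (hc 0 u hu) (hne 0 1 (by decide) u hu) (hne 1 2 (by decide) u hu)
    | exact master 2 0 1 (by decide) (by decide) (by decide) U hUo (b 2) (b 0) (b 1)
        (fun t => (Real.sqrt (a 2 t))⁻¹) (fun t => (Real.sqrt (a 0 t))⁻¹)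
        (fun t => (Real.sqrt (a 1 t))⁻¹) S0 (H 2) (H 0) (H 1)
        (fun v => by rw [hS0 v]; ring)
        (fun v hv => hbd 0 v hv) (fun v hv => hbd 1 v hv) hS0ne hH2 hH0 hH1 u hu
        (hc 0 u hu) (hc 1 u hu) (hne 1 2 (by decide) u hu) (hne 2 0 (by decide) u hu)
    | exact master 2 1 0 (by decide) (by decide) (by decide) U hUo (b 2) (b 1) (b 0)
        (fun t => (Real.sqrt (a 2 t))⁻¹) (fun t => (Real.sqrt (a 1 t))⁻¹)
        (fun t => (Real.sqrt (a 0 t))⁻¹) S1 (H 2) (H 1) (H 0)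
        (fun v => by rw [hS1 v, hS0 v]; ring)
        (fun v hv => hbd 1 v hv) (fun v hv => hbd 0 v hv) hS1ne hH2' hH1' hH0' u hu
        (hc 1 u hu) (hc 0 u hu) (hne 0 2 (by decide) u hu) (hne 2 1 (by decide) u hu)
end

section
/- Let D = {λ ∈ ℝ³ : λ¹ > λ² > λ³ > 0}, and on D set σ = λ¹+λ²+λ³, g₁ = σ(λ¹−λ²)(λ¹−λ³), g₂ = σ(λ²−λ¹)(λ²−λ³), g₃ = σ(λ³−λ¹)(λ³−λ²), and ρ = σ^{3/2}(λ¹−λ²)(λ¹−λ³)(λ²−λ³). Let k, k₀, k₁ be real constants and let φ₁, φ₂, φ₃ : ℝ → ℝ be C² functions satisfying φᵢ''(x) + (k²x³ + k₁x + k₀)φᵢ(x) = 0. Then the function ψ(λ) = σ^{−1/4}·φ₁(λ¹)φ₂(λ²)φ₃(λ³) satisfies ρ⁻¹ ∑_{i=1}^{3} ∂ᵢ((ρ/gᵢ) ∂ᵢψ) + k²ψ = 0 on D. -/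
open Function Filter Topology

theorem add_smul_single_eq_update {ι : Type*} [DecidableEq ι] (x : ι → ℝ) (i : ι) (t : ℝ) :
    x + t • Pi.single i 1 = update x i (x i + t) := by
  ext j
  rcases eq_or_ne j i with rfl | h <;> simp [*]

theorem lineDeriv_single_eq_deriv_update {ι E : Type*} [DecidableEq ι]
    [NormedAddCommGroup E] [NormedSpace ℝ E] (f : (ι → ℝ) → E) (x : ι → ℝ) (i : ι) :
    lineDeriv ℝ f x (Pi.single i 1) = deriv (fun t => f (update x i t)) (x i) := by
  simp only [lineDeriv, add_smul_single_eq_update]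
  simpa using deriv_comp_const_add (fun t => f (update x i t)) (x i) 0

theorem pd_update_self (i : Fin 3) (f : (Fin 3 → ℝ) → ℝ) (l : Fin 3 → ℝ) (y : ℝ) :
    pd i f (update l i y) = deriv (fun t => f (update l i t)) y := by
  simp [pd, lineDeriv_single_eq_deriv_update]

theorem pd_eq_deriv_update (i : Fin 3) (f : (Fin 3 → ℝ) → ℝ) (l : Fin 3 → ℝ) :
    pd i f l = deriv (fun t => f (update l i t)) (l i) := by
  simpa using pd_update_self i f l (l i)

theorem hasDerivAt_add_const_rpow (m p : ℝ) {x : ℝ} (hx : 0 < x + m) :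
    HasDerivAt (fun y => (y + m) ^ p) (p * (x + m) ^ (p - 1)) x := by
  simpa using ((hasDerivAt_id x).add_const m).rpow_const (p := p) (Or.inl hx.ne')

theorem hasDerivAt_rpow_half_mul_deriv_rpow_neg_quarter_mul {φ : ℝ → ℝ} (hφ : ContDiff ℝ 2 φ)
    {m x : ℝ} (hx : 0 < x + m) :
    HasDerivAt (fun y => (y + m) ^ (1 / 2 : ℝ) * deriv (fun z => (z + m) ^ (-1 / 4 : ℝ) * φ z) y)
      (3 / 16 * (x + m) ^ (-7 / 4 : ℝ) * φ x + (x + m) ^ (1 / 4 : ℝ) * deriv (deriv φ) x) x := by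
  have hdφ := hφ.differentiable (by norm_num)
  have hdφ' := hφ.differentiable_deriv_two
  have flux_eq :
      (fun y => (y + m) ^ (1 / 2 : ℝ) * deriv (fun z => (z + m) ^ (-1 / 4 : ℝ) * φ z) y) =ᶠ[𝓝 x]
        fun y => -1 / 4 * (y + m) ^ (-3 / 4 : ℝ) * φ y + (y + m) ^ (1 / 4 : ℝ) * deriv φ y := by
    filter_upwards [lt_mem_nhds (show -m < x by linarith)] with y hy
    have hy : 0 < y + m := by linarith
    rw [((hasDerivAt_add_const_rpow m _ hy).fun_mul (hdφ y).hasDerivAt).deriv]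
    have e1 : (y + m) ^ (1 / 2 : ℝ) * (y + m) ^ (-1 / 4 - 1 : ℝ) = (y + m) ^ (-3 / 4 : ℝ) := by
      rw [← Real.rpow_add hy]; norm_num
    have e2 : (y + m) ^ (1 / 2 : ℝ) * (y + m) ^ (-1 / 4 : ℝ) = (y + m) ^ (1 / 4 : ℝ) := by
      rw [← Real.rpow_add hy]; norm_num
    linear_combination (-1 / 4 * φ y) * e1 + deriv φ y * e2
  refine HasDerivAt.congr_of_eventuallyEq ?_ flux_eq
  convert (((hasDerivAt_add_const_rpow m (-3 / 4) hx).const_mul (-1 / 4)).fun_mul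
    (hdφ x).hasDerivAt).fun_add ((hasDerivAt_add_const_rpow m (1 / 4) hx).fun_mul
    (hdφ' x).hasDerivAt) using 1
  rw [show (-3 / 4 - 1 : ℝ) = -7 / 4 by norm_num, show (1 / 4 - 1 : ℝ) = -3 / 4 by norm_num]
  ring

theorem pd_mul_pd_eq_of_slice {f ψ : (Fin 3 → ℝ) → ℝ} {φ : ℝ → ℝ} (hφ : ContDiff ℝ 2 φ)
    {i : Fin 3} {l : Fin 3 → ℝ} {c C m : ℝ} (hm : 0 < l i + m)
    (hψ : ∀ y, ψ (update l i y) = C * ((y + m) ^ (-1 / 4 : ℝ) * φ y))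
    (hf : ∀ᶠ y in 𝓝 (l i), f (update l i y) = c * (y + m) ^ (1 / 2 : ℝ)) :
    pd i (fun w => f w * pd i ψ w) l = c * C * (3 / 16 * (l i + m) ^ (-7 / 4 : ℝ) * φ (l i) +
      (l i + m) ^ (1 / 4 : ℝ) * deriv (deriv φ) (l i)) := by
  have hslice : (fun y => f (update l i y) * pd i ψ (update l i y)) =ᶠ[𝓝 (l i)] fun y =>
      c * C * ((y + m) ^ (1 / 2 : ℝ) * deriv (fun z => (z + m) ^ (-1 / 4 : ℝ) * φ z) y) := by
    filter_upwards [hf] with y hy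
    rw [hy, pd_update_self, funext hψ, deriv_const_mul_field]
    ring
  rw [pd_eq_deriv_update, hslice.deriv_eq]
  exact ((hasDerivAt_rpow_half_mul_deriv_rpow_neg_quarter_mul hφ hm).const_mul (c * C)).deriv

@[to_additive]
theorem prod_three_rotate {M : Type*} [CommMonoid M] (f : Fin 3 → M) (i : Fin 3) :
    f 0 * f 1 * f 2 = f i * (f (i + 1) * f (i + 2)) := by
  rw [← Fin.prod_univ_three, ← Equiv.prod_comp (Equiv.addLeft i), Fin.prod_univ_three]
  simp [mul_assoc]

theorem vandermonde_three_rotate {R : Type*} [CommRing R] (l : Fin 3 → R) (i : Fin 3) :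
    (l 0 - l 1) * (l 0 - l 2) * (l 1 - l 2) =
      (l i - l (i + 1)) * (l i - l (i + 2)) * (l (i + 1) - l (i + 2)) := by
  fin_cases i <;> simp only [Fin.zero_eta, Fin.mk_one, Fin.reduceFinMk, Fin.reduceAdd] <;> ring

theorem Fin.three_add_one_ne (i : Fin 3) : i + 1 ≠ i := by decide +revert

theorem Fin.three_add_two_ne (i : Fin 3) : i + 2 ≠ i := by decide +revert

theorem rpow_three_halves_eq_mul_rpow_half {x : ℝ} (hx : 0 < x) :
    x ^ (3 / 2 : ℝ) = x * x ^ (1 / 2 : ℝ) := by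
  rw [show (3 / 2 : ℝ) = 1 + 1 / 2 by norm_num, Real.rpow_add hx, Real.rpow_one]

theorem pd_flux_kalninsMiller {σ g ρ ψ : (Fin 3 → ℝ) → ℝ} {φ : Fin 3 → ℝ → ℝ} {i : Fin 3}
    (hσ : ∀ l, σ l = l 0 + l 1 + l 2)
    (hg : ∀ l, g l = σ l * (l i - l (i + 1)) * (l i - l (i + 2)))
    (hρ : ∀ l, ρ l = σ l ^ (3 / 2 : ℝ) * (l 0 - l 1) * (l 0 - l 2) * (l 1 - l 2))
    (hφ : ContDiff ℝ 2 (φ i))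
    (hψ : ∀ l, ψ l = σ l ^ (-1 / 4 : ℝ) * (φ 0 (l 0) * φ 1 (l 1) * φ 2 (l 2)))
    {l : Fin 3 → ℝ} (hpos : 0 < σ l) (hinj : Injective l) :
    pd i (fun w => ρ w / g w * pd i ψ w) l =
      (l (i + 1) - l (i + 2)) * (φ (i + 1) (l (i + 1)) * φ (i + 2) (l (i + 2))) *
        (3 / 16 * σ l ^ (-7 / 4 : ℝ) * φ i (l i) +
          σ l ^ (1 / 4 : ℝ) * deriv (deriv (φ i)) (l i)) := by
  have hρ_rotate (w : Fin 3 → ℝ) : ρ w = σ w ^ (3 / 2 : ℝ) *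
      ((w i - w (i + 1)) * (w i - w (i + 2)) * (w (i + 1) - w (i + 2))) := by
    rw [hρ, ← vandermonde_three_rotate]
    ring
  have hσ_update (y : ℝ) : σ (update l i y) = y + (l (i + 1) + l (i + 2)) := by
    rw [hσ, sum_three_rotate, update_self, update_of_ne (Fin.three_add_one_ne i),
      update_of_ne (Fin.three_add_two_ne i)]
  have hσl : σ l = l i + (l (i + 1) + l (i + 2)) := by simpa using hσ_update (l i)
  rw [hσl] at hpos ⊢
  refine pd_mul_pd_eq_of_slice hφ hpos (fun y => ?_) ?_
  · have hprod := prod_three_rotate (fun j => φ j (update l i y j)) i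
    simp only [update_self, update_of_ne (Fin.three_add_one_ne i),
      update_of_ne (Fin.three_add_two_ne i)] at hprod
    rw [hψ, hσ_update, hprod]
    ring
  · have h1 : l i ≠ l (i + 1) := hinj.ne (Fin.three_add_one_ne i).symm
    have h2 : l i ≠ l (i + 2) := hinj.ne (Fin.three_add_two_ne i).symm
    filter_upwards [eventually_ne_nhds h1, eventually_ne_nhds h2,
      lt_mem_nhds (show -(l (i + 1) + l (i + 2)) < l i by linarith)] with y hy1 hy2 hy
    have hy : 0 < y + (l (i + 1) + l (i + 2)) := by linarith
    rw [hρ_rotate, hg, hσ_update, rpow_three_halves_eq_mul_rpow_half hy, update_self,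
      update_of_ne (Fin.three_add_one_ne i), update_of_ne (Fin.three_add_two_ne i)]
    have := sub_ne_zero.mpr hy1
    have := sub_ne_zero.mpr hy2
    field_simp

/-- **The Kalnins–Miller example.** On `D = {λ¹ > λ² > λ³ > 0}`, with
`σ = λ¹+λ²+λ³`, `gᵢ = σ·∏_{j≠i}(λⁱ-λʲ)`, and volume density
`ρ = σ^{3/2}(λ¹-λ²)(λ¹-λ³)(λ²-λ³)`, every choice of `C²` solutions of
`φᵢ'' + (k²x³ + k₁x + k₀)φᵢ = 0` yields a solution `ψ = σ^{-1/4}·φ₁φ₂φ₃` of the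
Helmholtz equation `ρ⁻¹∑ᵢ∂ᵢ((ρ/gᵢ)∂ᵢψ) + k²ψ = 0` on `D`. -/
theorem kalnins_miller_R_separability
    (D : Set (Fin 3 → ℝ)) (hD : D = {l | 0 < l 2 ∧ l 2 < l 1 ∧ l 1 < l 0})
    (σ g1 g2 g3 ρ : (Fin 3 → ℝ) → ℝ)
    (hσ : ∀ l, σ l = l 0 + l 1 + l 2)
    (hg1 : ∀ l, g1 l = σ l * (l 0 - l 1) * (l 0 - l 2))
    (hg2 : ∀ l, g2 l = σ l * (l 1 - l 0) * (l 1 - l 2))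
    (hg3 : ∀ l, g3 l = σ l * (l 2 - l 0) * (l 2 - l 1))
    (hρ : ∀ l, ρ l = σ l ^ ((3 : ℝ) / 2) * (l 0 - l 1) * (l 0 - l 2) * (l 1 - l 2))
    (k k0 k1 : ℝ)
    (φ : Fin 3 → ℝ → ℝ) (hφ : ∀ i, ContDiff ℝ 2 (φ i))
    (hode : ∀ i, ∀ x : ℝ,
      deriv (deriv (φ i)) x + (k ^ 2 * x ^ 3 + k1 * x + k0) * φ i x = 0)
    (ψ : (Fin 3 → ℝ) → ℝ)
    (hψ : ∀ l, ψ l = σ l ^ (-(1 : ℝ) / 4) * (φ 0 (l 0) * φ 1 (l 1) * φ 2 (l 2))) :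
    ∀ l ∈ D,
      (ρ l)⁻¹ * (pd 0 (fun w => ρ w / g1 w * pd 0 ψ w) l
          + pd 1 (fun w => ρ w / g2 w * pd 1 ψ w) l
          + pd 2 (fun w => ρ w / g3 w * pd 2 ψ w) l)
        + k ^ 2 * ψ l = 0 := by
  intro l hl
  rw [hD] at hl
  obtain ⟨h2, h21, h10⟩ := hl
  have hpos : 0 < σ l := by rw [hσ]; linarith
  have hinj : Injective l :=
    (Fin.strictAnti_iff_succ_lt.2 fun i => by fin_cases i; exacts [h10, h21]).injective
  have flux (i : Fin 3) (g : (Fin 3 → ℝ) → ℝ)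
      (hg : ∀ l, g l = σ l * (l i - l (i + 1)) * (l i - l (i + 2))) :=
    pd_flux_kalninsMiller hσ hg hρ (hφ i) hψ hpos hinj
  have hφ'' (i : Fin 3) (x : ℝ) :
      deriv (deriv (φ i)) x = -((k ^ 2 * x ^ 3 + k1 * x + k0) * φ i x) :=
    eq_neg_of_add_eq_zero_left (hode i x)
  have hpow :
      σ l ^ (1 / 4 : ℝ) * (l 0 + l 1 + l 2) = σ l ^ (3 / 2 : ℝ) * σ l ^ (-1 / 4 : ℝ) := by
    rw [← hσ, ← Real.rpow_add hpos, ← Real.rpow_add_one hpos.ne']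
    norm_num
  have hsum : pd 0 (fun w => ρ w / g1 w * pd 0 ψ w) l + pd 1 (fun w => ρ w / g2 w * pd 1 ψ w) l
      + pd 2 (fun w => ρ w / g3 w * pd 2 ψ w) l = -(k ^ 2 * ρ l * ψ l) := by
    rw [flux 0 g1 hg1, flux 1 g2 (fun w => by simp only [hg2, Fin.reduceAdd]; ring),
      flux 2 g3 hg3, hρ, hψ]
    simp only [hφ'', Fin.reduceAdd]
    linear_combination (-k ^ 2 * ((l 0 - l 1) * (l 0 - l 2) * (l 1 - l 2)) *
      (φ 0 (l 0) * φ 1 (l 1) * φ 2 (l 2))) * hpow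
  have hρ0 : ρ l ≠ 0 := by
    rw [hρ]
    exact (mul_pos (mul_pos (mul_pos (Real.rpow_pos_of_pos hpos _) (sub_pos.2 h10))
      (sub_pos.2 (h21.trans h10))) (sub_pos.2 h21)).ne'
  rw [hsum]
  field_simp
  ring
end
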